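/- arXiv:1605.07082 — 4 statements merged into one kernel-verified Lean document; each statement's English description precedes it below -/
import Mathlib

section
/- Let Γ₁ and Γ₂ be groups, (G,γ) a (Γ₁⊕Γ₂)-labeled simple graph, k ≥ 1 an integer, and f : ℕ → ℕ a function. Assume: (a) G does not contain k pairwise vertex-disjoint (Γ₁,Γ₂)-non-zero cycles; (b) there is no set X ⊆ V(G) with |X| ≤ f(k) such that G−X contains no (Γ₁,Γ₂)-non-zero cycle; (c) for every Y ⊆ V(G), the labeled graph G−Y either contains k−1 pairwise vertex-disjoint (Γ₁,Γ₂)-non-zero cycles or a set of at most f(k−1) vertices intersecting every (Γ₁,Γ₂)-non-zero cycle of G−Y. Let t ≥ 1 be an integer with t ≤ f(k) − 2·f(k−1) and 3t ≤ f(k). Then the set 𝒯 of all (t−1)-separations (A,B) of G such that B contains a (Γ₁,Γ₂)-non-zero cycle is a tangle of order t in G. -/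
open SimpleGraph

/-- The group-value of a walk in a group-labeled graph. -/
def walkVal {V Γ : Type} [Group Γ] {G : SimpleGraph V} (γ : V → V → Γ)
    {u v : V} (w : G.Walk u v) : Γ :=
  (w.darts.map fun d => γ d.toProd.1 d.toProd.2).prod

/-- `γ` is a labeling of the simple graph `G`. -/
def IsLab {V Γ : Type} [Group Γ] (G : SimpleGraph V) (γ : V → V → Γ) : Prop :=
  ∀ u v : V, G.Adj u v → γ v u = (γ u v)⁻¹

/-- A walk is `(Γ₁,Γ₂)`-non-zero if its value is non-identity in both coordinates. -/
def DNZ {V Γ₁ Γ₂ : Type} [Group Γ₁] [Group Γ₂] {G : SimpleGraph V}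
    (γ : V → V → Γ₁ × Γ₂) {u v : V} (w : G.Walk u v) : Prop :=
  walkVal (fun a b => (γ a b).1) w ≠ 1 ∧ walkVal (fun a b => (γ a b).2) w ≠ 1

/-- `(A, B)` is a `k`-separation of `G`: `A ∪ B = G`, `A` and `B` are edge-disjoint,
and the separator `V(A) ∩ V(B)` is finite of size at most `k`. -/
def IsSep {V : Type} (G : SimpleGraph V) (k : ℕ) (A B : G.Subgraph) : Prop :=
  A ⊔ B = ⊤ ∧ (∀ u v : V, ¬ (A.Adj u v ∧ B.Adj u v)) ∧
    (A.verts ∩ B.verts).Finite ∧ (A.verts ∩ B.verts).ncard ≤ k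

/-- `T` is a tangle of order `t` in `G`. -/
def IsTangle {V : Type} (G : SimpleGraph V) (t : ℕ)
    (T : Set (G.Subgraph × G.Subgraph)) : Prop :=
  (∀ p ∈ T, IsSep G (t - 1) p.1 p.2) ∧
  (∀ A B : G.Subgraph, IsSep G (t - 1) A B → (A, B) ∈ T ∨ (B, A) ∈ T) ∧
  (∀ p ∈ T, p.1.verts ≠ Set.univ) ∧
  (∀ p ∈ T, ∀ q ∈ T, ∀ r ∈ T, p.1 ⊔ q.1 ⊔ r.1 ≠ ⊤)

/-- A closed walk of `G` lies in the subgraph `B`: every dart of the walk is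
an adjacency of `B`. -/
def CycIn {V : Type} {G : SimpleGraph V} (B : G.Subgraph) {u : V} (c : G.Walk u u) : Prop :=
  ∀ d ∈ c.darts, B.Adj d.toProd.1 d.toProd.2

/-!
By (b), some non-zero cycle misses the at most `t - 1 ≤ f(k)` vertices of the separator `A ∩ B` of
a separation `(A, B)`, so it lies in `A - B` or in `B - A`; this gives (T1). By (a) and (c), once a
vertex set `Y` containing a non-zero cycle is deleted, the remaining non-zero cycles have a cover
of size `f(k-1)`. If `A` and `B` both contained non-zero cycles, the covers `X_A`, `X_B` for
`Y = V(A)`, `Y = V(B)` together with `A ∩ B` would have at most `f(k)` vertices, so some non-zero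
cycle misses all three; it would meet both `A` and `B` while missing `A ∩ B`, which is impossible.
Hence, for `(A, B) ∈ 𝒯`, every non-zero cycle missing `A ∩ B` lies in `B - A`. A non-zero cycle
missing the at most `3(t-1)` separator vertices of three members `(Aᵢ, Bᵢ)` of `𝒯` therefore
avoids every `Aᵢ`, which gives (T2) and (T3).
-/

open Finset

section Separations

variable {V : Type} {G : SimpleGraph V} {A B : G.Subgraph}

lemma mem_verts_or_mem_verts_of_sup_eq_top (hAB : A ⊔ B = ⊤) (v : V) :
    v ∈ A.verts ∨ v ∈ B.verts := by
  rw [← Set.mem_union, ← Subgraph.verts_sup, hAB, Subgraph.verts_top]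
  trivial

lemma adj_or_adj_of_sup_eq_top (hAB : A ⊔ B = ⊤) {x y : V} (h : G.Adj x y) :
    A.Adj x y ∨ B.Adj x y := by
  rw [← Subgraph.sup_adj, hAB, Subgraph.top_adj]
  exact h

lemma SimpleGraph.Walk.avoids_or_avoids_of_avoids_inter (hAB : A ⊔ B = ⊤) {u w : V}
    (p : G.Walk u w) (hp : ∀ v ∈ p.support, v ∉ A.verts ∩ B.verts) :
    (∀ v ∈ p.support, v ∉ A.verts) ∨ ∀ v ∈ p.support, v ∉ B.verts := by
  classical
  by_contra! ⟨⟨a, ha, haA⟩, ⟨b, hb, hbB⟩⟩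
  let q := (p.takeUntil a ha).reverse.append (p.takeUntil b hb)
  have hq : ∀ v ∈ q.support, v ∈ p.support := by
    intro v hv
    rw [Walk.mem_support_append_iff, Walk.support_reverse, List.mem_reverse] at hv
    exact hv.elim (fun h => p.support_takeUntil_subset_support ha h)
      (fun h => p.support_takeUntil_subset_support hb h)
  obtain ⟨d, hd, hdA, hdA'⟩ := q.exists_boundary_dart A.verts haA fun hbA => hp b hb ⟨hbA, hbB⟩
  have hdB : B.Adj d.fst d.snd :=
    (adj_or_adj_of_sup_eq_top hAB d.adj).resolve_left fun h => hdA' h.snd_mem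
  exact hp d.fst (hq _ (q.dart_fst_mem_support_of_mem_darts hd)) ⟨hdA, hdB.fst_mem⟩

lemma cycIn_of_avoids (hAB : A ⊔ B = ⊤) {u : V} {c : G.Walk u u}
    (hc : ∀ v ∈ c.support, v ∉ A.verts) : CycIn B c := fun d hd =>
  (adj_or_adj_of_sup_eq_top hAB d.adj).resolve_left fun h =>
    hc _ (c.dart_fst_mem_support_of_mem_darts hd) h.fst_mem

lemma CycIn.mem_verts {u : V} {c : G.Walk u u} (hB : CycIn B c) (hc : ¬ c.Nil) {v : V}
    (hv : v ∈ c.support) : v ∈ B.verts := by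
  have hv' : v ∈ c.support.tail := by
    rw [← c.cons_tail_support, List.mem_cons] at hv
    exact hv.elim (fun h => h ▸ c.end_mem_tail_support hc) id
  rw [← c.map_snd_darts, List.mem_map] at hv'
  obtain ⟨d, hd, rfl⟩ := hv'
  exact (hB d hd).snd_mem

lemma IsSep.symm {s : ℕ} (h : IsSep G s A B) : IsSep G s B A := by
  obtain ⟨hAB, hE, hfin, hcard⟩ := h
  exact ⟨sup_comm A B ▸ hAB, fun u v h => hE u v h.symm, Set.inter_comm _ _ ▸ hfin,
    Set.inter_comm A.verts _ ▸ hcard⟩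

lemma IsSep.exists_finset {s : ℕ} (h : IsSep G s A B) :
    ∃ Z : Finset V, (Z : Set V) = A.verts ∩ B.verts ∧ Z.card ≤ s :=
  ⟨h.2.2.1.toFinset, h.2.2.1.coe_toFinset,
    by rw [← Set.ncard_eq_toFinset_card _ h.2.2.1]; exact h.2.2.2⟩

end Separations

section NonZeroCycles

variable {V Γ₁ Γ₂ : Type} [Group Γ₁] [Group Γ₂] (G : SimpleGraph V) (γ : V → V → Γ₁ × Γ₂)

def ExistsNZCycleAvoiding (Y : Set V) : Prop :=
  ∃ (u : V) (c : G.Walk u u), c.IsCycle ∧ DNZ γ c ∧ ∀ v ∈ c.support, v ∉ Y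

def ExistsNZCycleWithin (Y : Set V) : Prop :=
  ∃ (u : V) (c : G.Walk u u), c.IsCycle ∧ DNZ γ c ∧ ∀ v ∈ c.support, v ∈ Y

def HasNoNZCycleCover (n : ℕ) : Prop :=
  ∀ X : Finset V, X.card ≤ n → ExistsNZCycleAvoiding G γ X

/-- Whenever `Y` contains a `(Γ₁,Γ₂)`-non-zero cycle, the non-zero cycles of `G - Y` have a cover
of at most `n` vertices. -/
def HasNZCycleCoverOff (n : ℕ) : Prop :=
  ∀ Y : Set V, ExistsNZCycleWithin G γ Y →
    ∃ X : Finset V, X.card ≤ n ∧ ¬ ExistsNZCycleAvoiding G γ (Y ∪ X)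

def nzSeparations (s : ℕ) : Set (G.Subgraph × G.Subgraph) :=
  {p | IsSep G s p.1 p.2 ∧ ∃ (u : V) (c : G.Walk u u), c.IsCycle ∧ DNZ γ c ∧ CycIn p.2 c}

variable {G γ} {n n' s : ℕ}

lemma HasNoNZCycleCover.exists_avoiding_meeting (h1 : HasNoNZCycleCover G γ n)
    (h2 : HasNZCycleCoverOff G γ n') {Y₁ Y₂ : Set V} (hY₁ : ExistsNZCycleWithin G γ Y₁)
    (hY₂ : ExistsNZCycleWithin G γ Y₂) (Z : Finset V) (hZ : Z.card + 2 * n' ≤ n) :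
    ∃ (u : V) (c : G.Walk u u), c.IsCycle ∧ DNZ γ c ∧ (∀ v ∈ c.support, v ∉ Z) ∧
      (∃ v ∈ c.support, v ∈ Y₁) ∧ ∃ v ∈ c.support, v ∈ Y₂ := by
  classical
  obtain ⟨X₁, hX₁, hoff₁⟩ := h2 Y₁ hY₁
  obtain ⟨X₂, hX₂, hoff₂⟩ := h2 Y₂ hY₂
  have hcard : (X₁ ∪ X₂ ∪ Z).card ≤ n := calc
    _ ≤ X₁.card + X₂.card + Z.card :=
      (card_union_le _ _).trans (Nat.add_le_add_right (card_union_le _ _) _)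
    _ ≤ n := by omega
  obtain ⟨u, c, hcyc, hnz, hc⟩ := h1 _ hcard
  have hmeets {Y : Set V} {X : Finset V} (hX : X ⊆ X₁ ∪ X₂ ∪ Z)
      (hoff : ¬ ExistsNZCycleAvoiding G γ (Y ∪ X)) : ∃ v ∈ c.support, v ∈ Y := by
    by_contra! hY
    exact hoff ⟨u, c, hcyc, hnz, fun v hv hvYX =>
      hvYX.elim (hY v hv) fun hvX => hc v hv (hX hvX)⟩
  refine ⟨u, c, hcyc, hnz, fun v hv hvZ => hc v hv (by simp [hvZ]),
    hmeets ?_ hoff₁, hmeets ?_ hoff₂⟩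
  · exact subset_union_left.trans subset_union_left
  · exact subset_union_right.trans subset_union_left

lemma existsNZCycleWithin_of_mem_nzSeparations {p : G.Subgraph × G.Subgraph}
    (hp : p ∈ nzSeparations G γ s) : ExistsNZCycleWithin G γ p.2.verts := by
  obtain ⟨-, u, c, hc, hnz, hcB⟩ := hp
  exact ⟨u, c, hc, hnz, fun v hv => hcB.mem_verts hc.not_nil hv⟩

lemma avoids_fst_of_mem_nzSeparations (h1 : HasNoNZCycleCover G γ n)
    (h2 : HasNZCycleCoverOff G γ n') (hs : s + 2 * n' ≤ n) {p : G.Subgraph × G.Subgraph}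
    (hp : p ∈ nzSeparations G γ s) {u : V} {c : G.Walk u u} (hc : c.IsCycle) (hnz : DNZ γ c)
    (hcZ : ∀ v ∈ c.support, v ∉ p.1.verts ∩ p.2.verts) : ∀ v ∈ c.support, v ∉ p.1.verts := by
  obtain ⟨A, B⟩ := p
  have hAB : A ⊔ B = ⊤ := hp.1.1
  refine (c.avoids_or_avoids_of_avoids_inter hAB hcZ).resolve_right fun hcB => ?_
  have hA : ExistsNZCycleWithin G γ A.verts :=
    ⟨u, c, hc, hnz, fun v hv =>
      (mem_verts_or_mem_verts_of_sup_eq_top hAB v).resolve_right (hcB v hv)⟩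
  obtain ⟨Z, hZ, hZs⟩ := hp.1.exists_finset
  obtain ⟨w, c', -, -, hc'Z, ⟨a, ha, haA⟩, ⟨b, hb, hbB⟩⟩ :=
    h1.exists_avoiding_meeting h2 hA (existsNZCycleWithin_of_mem_nzSeparations hp) Z (by omega)
  rcases c'.avoids_or_avoids_of_avoids_inter hAB (by rwa [← hZ]) with h | h
  · exact h a ha haA
  · exact h b hb hbB

lemma mem_nzSeparations_or_swap_mem (h1 : HasNoNZCycleCover G γ n) (hs : s ≤ n)
    {A B : G.Subgraph} (hsep : IsSep G s A B) :
    (A, B) ∈ nzSeparations G γ s ∨ (B, A) ∈ nzSeparations G γ s := by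
  obtain ⟨Z, hZ, hZs⟩ := hsep.exists_finset
  obtain ⟨u, c, hc, hnz, hcZ⟩ := h1 Z (by omega)
  rcases c.avoids_or_avoids_of_avoids_inter hsep.1 (by rwa [← hZ]) with h | h
  · exact .inl ⟨hsep, u, c, hc, hnz, cycIn_of_avoids hsep.1 h⟩
  · exact .inr ⟨hsep.symm, u, c, hc, hnz, cycIn_of_avoids hsep.symm.1 h⟩

theorem isTangle_nzSeparations (h1 : HasNoNZCycleCover G γ n) (h2 : HasNZCycleCoverOff G γ n')
    {t : ℕ} (ht2 : t - 1 + 2 * n' ≤ n) (ht3 : 3 * (t - 1) ≤ n) :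
    IsTangle G t (nzSeparations G γ (t - 1)) := by
  classical
  refine ⟨fun p hp => hp.1, fun A B => mem_nzSeparations_or_swap_mem h1 (by omega), ?_, ?_⟩
  · intro p hp hA
    obtain ⟨Z, hZ, hZs⟩ := hp.1.exists_finset
    obtain ⟨u, c, hc, hnz, hcZ⟩ := h1 Z (by omega)
    exact avoids_fst_of_mem_nzSeparations h1 h2 ht2 hp hc hnz (hZ ▸ hcZ) u c.start_mem_support
      (hA ▸ Set.mem_univ u)
  · intro p hp q hq r hr hpqr
    obtain ⟨Z₁, hZ₁, hZ₁s⟩ := hp.1.exists_finset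
    obtain ⟨Z₂, hZ₂, hZ₂s⟩ := hq.1.exists_finset
    obtain ⟨Z₃, hZ₃, hZ₃s⟩ := hr.1.exists_finset
    have hcard : (Z₁ ∪ Z₂ ∪ Z₃).card ≤ n :=
      (card_union_le _ _).trans (by have := card_union_le Z₁ Z₂; omega)
    obtain ⟨u, c, hc, hnz, hcZ⟩ := h1 _ hcard
    have hstart {p' : G.Subgraph × G.Subgraph} (hp' : p' ∈ nzSeparations G γ (t - 1))
        {Z : Finset V} (hZ : (Z : Set V) = p'.1.verts ∩ p'.2.verts) (hZ' : Z ⊆ Z₁ ∪ Z₂ ∪ Z₃) :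
        u ∉ p'.1.verts :=
      avoids_fst_of_mem_nzSeparations h1 h2 ht2 hp' hc hnz
        (fun v hv hvZ => hcZ v hv (hZ' (by rwa [← hZ] at hvZ))) u c.start_mem_support
    have hu : u ∈ (p.1 ⊔ q.1 ⊔ r.1).verts := hpqr ▸ Set.mem_univ u
    rw [Subgraph.verts_sup, Subgraph.verts_sup] at hu
    rcases hu with (hu | hu) | hu
    · exact hstart hp hZ₁ (subset_union_left.trans subset_union_left) hu
    · exact hstart hq hZ₂ (subset_union_right.trans subset_union_left) hu
    · exact hstart hr hZ₃ subset_union_right hu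

lemma exists_disjoint_nzCycles_cons {m : ℕ} {u₀ : V} {c₀ : G.Walk u₀ u₀} (hc₀ : c₀.IsCycle)
    (hnz₀ : DNZ γ c₀) (u : Fin m → V) (c : ∀ i, G.Walk (u i) (u i)) (hc : ∀ i, (c i).IsCycle)
    (hnz : ∀ i, DNZ γ (c i)) (hc₀c : ∀ i, ∀ v ∈ (c i).support, v ∉ c₀.support)
    (hdisj : ∀ i j, i ≠ j → ∀ v : V, v ∈ (c i).support → v ∉ (c j).support) :
    ∃ (u : Fin (m + 1) → V) (c : ∀ i, G.Walk (u i) (u i)),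
      (∀ i, (c i).IsCycle) ∧ (∀ i, DNZ γ (c i)) ∧
      ∀ i j, i ≠ j → ∀ v : V, v ∈ (c i).support → v ∉ (c j).support := by
  let F : Fin (m + 1) → Σ v, G.Walk v v := Fin.cons ⟨u₀, c₀⟩ fun i => ⟨u i, c i⟩
  refine ⟨fun i => (F i).1, fun i => (F i).2, Fin.cases hc₀ hc, Fin.cases hnz₀ hnz, ?_⟩
  intro i j hij
  induction i using Fin.cases with
  | zero =>
    induction j using Fin.cases with
    | zero => exact absurd rfl hij
    | succ j => exact fun v hv hv' => hc₀c j v hv' hv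
  | succ i =>
    induction j using Fin.cases with
    | zero => exact hc₀c i
    | succ j => exact hdisj i j fun h => hij (congrArg Fin.succ h)

end NonZeroCycles

theorem tangle_of_minimal_counterexample_general
    {V Γ₁ Γ₂ : Type} [Group Γ₁] [Group Γ₂] (G : SimpleGraph V)
    (γ : V → V → Γ₁ × Γ₂) (k : ℕ) (hk : 1 ≤ k) (f : ℕ → ℕ)
    (ha : ¬ ∃ (u : Fin k → V) (c : ∀ i, G.Walk (u i) (u i)),
        (∀ i, (c i).IsCycle) ∧ (∀ i, DNZ γ (c i)) ∧
        (∀ i j, i ≠ j → ∀ v : V, v ∈ (c i).support → v ∉ (c j).support))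
    (hb : ¬ ∃ X : Finset V, X.card ≤ f k ∧
        ∀ (u : V) (c : G.Walk u u), c.IsCycle → DNZ γ c → ∃ x ∈ X, x ∈ c.support)
    (hc : ∀ Y : Set V,
        (∃ (u : Fin (k - 1) → V) (c : ∀ i, G.Walk (u i) (u i)),
            (∀ i, (c i).IsCycle) ∧ (∀ i, DNZ γ (c i)) ∧
            (∀ i, ∀ v ∈ (c i).support, v ∉ Y) ∧
            (∀ i j, i ≠ j → ∀ v : V, v ∈ (c i).support → v ∉ (c j).support)) ∨
        (∃ X : Finset V, X.card ≤ f (k - 1) ∧ (∀ x ∈ X, x ∉ Y) ∧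
            ∀ (u : V) (c : G.Walk u u), c.IsCycle → DNZ γ c →
              (∀ v ∈ c.support, v ∉ Y) → ∃ x ∈ X, x ∈ c.support))
    (t : ℕ) (ht2 : t + 2 * f (k - 1) ≤ f k) (ht3 : 3 * t ≤ f k) :
    IsTangle G t {p : G.Subgraph × G.Subgraph |
      IsSep G (t - 1) p.1 p.2 ∧
        ∃ (u : V) (c : G.Walk u u), c.IsCycle ∧ DNZ γ c ∧ CycIn p.2 c} := by
  have hcover : HasNoNZCycleCover G γ (f k) := fun X hX => by
    by_contra hno
    refine hb ⟨X, hX, fun u c hcyc hnz => ?_⟩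
    by_contra! hmiss
    exact hno ⟨u, c, hcyc, hnz, fun v hv hvX => hmiss v hvX hv⟩
  have hcoverOff : HasNZCycleCoverOff G γ (f (k - 1)) := by
    rintro Y ⟨u₀, c₀, hcyc₀, hnz₀, hc₀Y⟩
    rcases hc Y with ⟨u, c, hcyc, hnz, hcY, hdisj⟩ | ⟨X, hXcard, -, hX⟩
    · refine absurd ?_ ha
      rw [← Nat.sub_add_cancel hk]
      exact exists_disjoint_nzCycles_cons hcyc₀ hnz₀ u c hcyc hnz
        (fun i v hv hv₀ => hcY i v hv (hc₀Y v hv₀)) hdisj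
    · refine ⟨X, hXcard, fun ⟨u, c, hcyc, hnz, hcYX⟩ => ?_⟩
      obtain ⟨x, hx, hxc⟩ := hX u c hcyc hnz fun v hv hvY => hcYX v hv (.inl hvY)
      exact hcYX x hxc (.inr hx)
  exact isTangle_nzSeparations hcover hcoverOff (by omega) (by omega)

/-- Lemma 2.1 (Wollan): in a minimal counterexample to `f` being an Erdős–Pósa function
for `(Γ₁,Γ₂)`-non-zero cycles, the set of `(t-1)`-separations whose big side contains a
`(Γ₁,Γ₂)`-non-zero cycle is a tangle of order `t`. -/
theorem tangle_of_minimal_counterexample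
    {V Γ₁ Γ₂ : Type} [Group Γ₁] [Group Γ₂] (G : SimpleGraph V)
    (γ : V → V → Γ₁ × Γ₂) (hγ : IsLab G γ) (k : ℕ) (hk : 1 ≤ k) (f : ℕ → ℕ)
    (ha : ¬ ∃ (u : Fin k → V) (c : ∀ i, G.Walk (u i) (u i)),
        (∀ i, (c i).IsCycle) ∧ (∀ i, DNZ γ (c i)) ∧
        (∀ i j, i ≠ j → ∀ v : V, v ∈ (c i).support → v ∉ (c j).support))
    (hb : ¬ ∃ X : Finset V, X.card ≤ f k ∧
        ∀ (u : V) (c : G.Walk u u), c.IsCycle → DNZ γ c → ∃ x ∈ X, x ∈ c.support)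
    (hc : ∀ Y : Set V,
        (∃ (u : Fin (k - 1) → V) (c : ∀ i, G.Walk (u i) (u i)),
            (∀ i, (c i).IsCycle) ∧ (∀ i, DNZ γ (c i)) ∧
            (∀ i, ∀ v ∈ (c i).support, v ∉ Y) ∧
            (∀ i j, i ≠ j → ∀ v : V, v ∈ (c i).support → v ∉ (c j).support)) ∨
        (∃ X : Finset V, X.card ≤ f (k - 1) ∧ (∀ x ∈ X, x ∉ Y) ∧
            ∀ (u : V) (c : G.Walk u u), c.IsCycle → DNZ γ c →
              (∀ v ∈ c.support, v ∉ Y) → ∃ x ∈ X, x ∈ c.support))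
    (t : ℕ) (ht1 : 1 ≤ t) (ht2 : t + 2 * f (k - 1) ≤ f k) (ht3 : 3 * t ≤ f k) :
    IsTangle G t {p : G.Subgraph × G.Subgraph |
      IsSep G (t - 1) p.1 p.2 ∧
        ∃ (u : V) (c : G.Walk u u), c.IsCycle ∧ DNZ γ c ∧ CycIn p.2 c} :=
  tangle_of_minimal_counterexample_general G γ k hk f ha hb hc t ht2 ht3
end

section
/- Let Γ₁ and Γ₂ be groups and (G,γ) a (Γ₁⊕Γ₂)-labeled simple graph. Suppose G contains two vertex-disjoint cycles C₁ and C₂ and two vertex-disjoint C₁–C₂-paths P₁ and P₂ (each with one end on C₁, the other end on C₂, and no internal vertex on C₁ ∪ C₂), such that C₁ is Γ₁-non-zero and C₂ is Γ₂-non-zero. Then the subgraph C₁ ∪ C₂ ∪ P₁ ∪ P₂ contains a (Γ₁,Γ₂)-non-zero cycle. -/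
open SimpleGraph

/-!
If `C₂` has non-zero `Γ₁`-value, `C₂` itself is the cycle. Otherwise the ends of `P₁, P₂` cut `C₁`
into two arcs with different `Γ₁`-values (their quotient is conjugate to the value of `C₁`) and
`C₂` into two arcs with equal `Γ₁`-values and different `Γ₂`-values. In the cycle `S P₂ T P₁⁻¹`,
choose the arc `S` of `C₁` making the `Γ₁`-value non-zero, then the arc `T` of `C₂` making the
`Γ₂`-value non-zero; the second choice does not change the `Γ₁`-value.
-/

section WalkValue

variable {V Γ : Type} [Group Γ] {G : SimpleGraph V}

lemma walkVal_append (γ : V → V → Γ) {u v w : V} (p : G.Walk u v) (q : G.Walk v w) :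
    walkVal γ (p.append q) = walkVal γ p * walkVal γ q := by
  simp [walkVal, Walk.darts_append]

lemma walkVal_reverse {γ : V → V → Γ} (hγ : IsLab G γ) {u v : V} (p : G.Walk u v) :
    walkVal γ p.reverse = (walkVal γ p)⁻¹ := by
  rw [walkVal, walkVal, List.prod_inv_reverse, Walk.darts_reverse, List.map_reverse, List.map_map,
    List.map_map]
  congr 2
  exact List.map_congr_left fun d _ => hγ _ _ d.adj

lemma walkVal_map {Γ' : Type} [Group Γ'] (f : Γ →* Γ') (γ : V → V → Γ) {u v : V}
    (p : G.Walk u v) : walkVal (fun a b => f (γ a b)) p = f (walkVal γ p) := by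
  simp [walkVal, map_list_prod, List.map_map, Function.comp_def]

lemma walkVal_fst {Γ₁ Γ₂ : Type} [Group Γ₁] [Group Γ₂] (γ : V → V → Γ₁ × Γ₂) {u v : V}
    (p : G.Walk u v) : walkVal (fun a b => (γ a b).1) p = (walkVal γ p).1 :=
  walkVal_map (MonoidHom.fst Γ₁ Γ₂) γ p

lemma walkVal_snd {Γ₁ Γ₂ : Type} [Group Γ₁] [Group Γ₂] (γ : V → V → Γ₁ × Γ₂) {u v : V}
    (p : G.Walk u v) : walkVal (fun a b => (γ a b).2) p = (walkVal γ p).2 :=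
  walkVal_map (MonoidHom.snd Γ₁ Γ₂) γ p

lemma walkVal_rotate_isConj [DecidableEq V] (γ : V → V → Γ) {u v : V} (c : G.Walk v v)
    (h : u ∈ c.support) : IsConj (walkVal γ (c.rotate u h)) (walkVal γ c) := by
  conv_rhs => rw [← c.take_spec h]
  rw [Walk.rotate, walkVal_append, walkVal_append]
  exact isConj_iff.2 ⟨walkVal γ (c.takeUntil u h), by group⟩

end WalkValue

lemma eq_iff_of_isConj_mul_inv {Γ : Type} [Group Γ] {x y c : Γ} (h : IsConj (x * y⁻¹) c) :
    x = y ↔ c = 1 := by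
  rw [← mul_inv_eq_one, ← isConj_one_right, ← isConj_one_right (a := c)]
  exact ⟨fun h₁ => h₁.trans h, fun h₁ => h₁.trans h.symm⟩

lemma Prod.fst_eq_fst_iff_of_isConj {Γ₁ Γ₂ : Type} [Group Γ₁] [Group Γ₂] {x y c : Γ₁ × Γ₂}
    (h : IsConj (x * y⁻¹) c) : x.1 = y.1 ↔ c.1 = 1 :=
  eq_iff_of_isConj_mul_inv ((MonoidHom.fst Γ₁ Γ₂).map_isConj h)

lemma Prod.snd_eq_snd_iff_of_isConj {Γ₁ Γ₂ : Type} [Group Γ₁] [Group Γ₂] {x y c : Γ₁ × Γ₂}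
    (h : IsConj (x * y⁻¹) c) : x.2 = y.2 ↔ c.2 = 1 :=
  eq_iff_of_isConj_mul_inv ((MonoidHom.snd Γ₁ Γ₂).map_isConj h)

lemma mul_ne_one_or_mul_ne_one_of_ne {Γ : Type} [Group Γ] {x y : Γ} (h : x ≠ y) (l r : Γ) :
    l * x * r ≠ 1 ∨ l * y * r ≠ 1 := by
  by_contra! hxy
  exact h (by simpa using hxy.1.trans hxy.2.symm)

lemma exists_fst_ne_one_and_snd_ne_one {Γ₁ Γ₂ α β : Type} [Group Γ₁] [Group Γ₂]
    (f : α → Γ₁ × Γ₂) (g : β → Γ₁ × Γ₂) {s s' : α} {t t' : β} (hs : (f s).1 ≠ (f s').1)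
    (ht₁ : (g t).1 = (g t').1) (ht₂ : (g t).2 ≠ (g t').2) (a b : Γ₁ × Γ₂) :
    ∃ σ ∈ ({s, s'} : Set α), ∃ τ ∈ ({t, t'} : Set β),
      (f σ * a * g τ * b).1 ≠ 1 ∧ (f σ * a * g τ * b).2 ≠ 1 := by
  obtain ⟨σ, hσ, hσ₁⟩ : ∃ σ ∈ ({s, s'} : Set α), (f σ * a * g t * b).1 ≠ 1 := by
    rcases mul_ne_one_or_mul_ne_one_of_ne hs 1 (a * g t * b).1 with h | h
    · exact ⟨s, .inl rfl, by simpa [mul_assoc] using h⟩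
    · exact ⟨s', .inr rfl, by simpa [mul_assoc] using h⟩
  rcases mul_ne_one_or_mul_ne_one_of_ne ht₂ (f σ * a).2 b.2 with h | h
  · exact ⟨σ, hσ, t, .inl rfl, hσ₁, by simpa using h⟩
  · exact ⟨σ, hσ, t', .inr rfl, by simpa [← ht₁] using hσ₁, by simpa using h⟩

lemma eq_of_mem_of_ne_imp_notMem {V : Type} {X Y : Set V} (hXY : Disjoint X Y) {x y z : V}
    (hy : y ∈ Y) (hz : z ≠ x → z ≠ y → z ∉ X ∧ z ∉ Y) (hzX : z ∈ X) : z = x := by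
  by_contra hzx
  by_cases hzy : z = y
  · exact Set.disjoint_left.1 hXY hzX (hzy ▸ hy)
  · exact (hz hzx hzy).1 hzX

namespace SimpleGraph.Walk

variable {V : Type} {G : SimpleGraph V}

lemma support_subset_of_toSubgraph_le {u v u' v' : V} {p : G.Walk u v} {q : G.Walk u' v'}
    (h : p.toSubgraph ≤ q.toSubgraph) : p.support ⊆ q.support := fun _ hz =>
  q.mem_verts_toSubgraph.1 (h.1 (p.mem_verts_toSubgraph.2 hz))

lemma edges_subset_of_toSubgraph_le {u v u' v' : V} {p : G.Walk u v} {q : G.Walk u' v'}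
    (h : p.toSubgraph ≤ q.toSubgraph) : p.edges ⊆ q.edges := fun _ he =>
  q.mem_edges_toSubgraph.1 (Subgraph.edgeSet_mono h (p.mem_edges_toSubgraph.2 he))

lemma IsPath.start_notMem_support_tail {u v : V} {p : G.Walk u v} (hp : p.IsPath) :
    u ∉ p.support.tail := by
  have h := hp.support_nodup
  rw [← p.cons_tail_support, List.nodup_cons] at h
  exact h.1

lemma IsPath.append_of_meet {u v w : V} {p : G.Walk u v} {q : G.Walk v w} (hp : p.IsPath)
    (hq : q.IsPath) (hmeet : ∀ x ∈ p.support, x ∈ q.support → x = v) : (p.append q).IsPath := by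
  refine IsPath.mk' ?_
  rw [support_append]
  exact List.nodup_append'.2 ⟨hp.support_nodup, hq.support_nodup.tail, fun x hxp hxq =>
    hq.start_notMem_support_tail (hmeet x hxp (List.mem_of_mem_tail hxq) ▸ hxq)⟩

lemma IsPath.isCycle_append_of_meet {u v : V} {p : G.Walk u v} {q : G.Walk v u} (hp : p.IsPath)
    (hq : q.IsPath) (hmeet : ∀ x ∈ p.support, x ∈ q.support → x = u ∨ x = v)
    (hlen : 1 < p.length ∨ 1 < q.length) : (p.append q).IsCycle := by
  refine hp.isCycle_append hq (fun x hxp hxq => ?_) hlen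
  rcases hmeet x (List.mem_of_mem_tail hxp) (List.mem_of_mem_tail hxq) with rfl | rfl
  exacts [hp.start_notMem_support_tail hxp, hq.start_notMem_support_tail hxq]

lemma IsCycle.exists_arcs_isConj {Γ : Type} [Group Γ] {γ : V → V → Γ} (hγ : IsLab G γ)
    {v u w : V} {c : G.Walk v v} (hc : c.IsCycle) (hu : u ∈ c.support) (hw : w ∈ c.support)
    (huw : u ≠ w) :
    ∃ p q : G.Walk u w,
      (∀ r ∈ ({p, q} : Set (G.Walk u w)), r.IsPath ∧ r.toSubgraph ≤ c.toSubgraph) ∧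
      IsConj (walkVal γ p * (walkVal γ q)⁻¹) (walkVal γ c) := by
  classical
  set c' := c.rotate u hu
  have hw' : w ∈ c'.support := (c.mem_support_rotate_iff u hu).2 hw
  have hc' : ((c'.takeUntil w hw').append (c'.dropUntil w hw')).IsCycle := by
    rw [take_spec]
    exact hc.rotate hu
  have hsplit :
      c.toSubgraph = (c'.takeUntil w hw').toSubgraph ⊔ (c'.dropUntil w hw').toSubgraph := by
    rw [← toSubgraph_append, take_spec, toSubgraph_rotate]
  refine ⟨c'.takeUntil w hw', (c'.dropUntil w hw').reverse, ?_, ?_⟩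
  · rintro r (rfl | rfl)
    · exact ⟨(hc.rotate hu).isPath_takeUntil hw', hsplit ▸ le_sup_left⟩
    · exact ⟨(hc'.isPath_of_append_right (not_nil_of_ne huw)).reverse,
        by rw [toSubgraph_reverse, hsplit]; exact le_sup_right⟩
  rw [walkVal_reverse hγ, inv_inv, ← walkVal_append, take_spec]
  exact walkVal_rotate_isConj γ c hu

lemma IsPath.isCycle_append_append_append_reverse {X Y : Set V} (hXY : Disjoint X Y)
    {x₁ y₁ x₂ y₂ : V} {S : G.Walk x₁ x₂} {T : G.Walk y₂ y₁} {P₁ : G.Walk x₁ y₁}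
    {P₂ : G.Walk x₂ y₂} (hS : S.IsPath) (hT : T.IsPath) (hP₁ : P₁.IsPath) (hP₂ : P₂.IsPath)
    (hSX : ∀ z ∈ S.support, z ∈ X) (hTY : ∀ z ∈ T.support, z ∈ Y)
    (hint₁ : ∀ z ∈ P₁.support, z ≠ x₁ → z ≠ y₁ → z ∉ X ∧ z ∉ Y)
    (hint₂ : ∀ z ∈ P₂.support, z ≠ x₂ → z ≠ y₂ → z ∉ X ∧ z ∉ Y)
    (hPP : ∀ v ∈ P₁.support, v ∉ P₂.support) :
    (S.append (P₂.append (T.append P₁.reverse))).IsCycle := by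
  have hx₁ := hSX _ S.start_mem_support
  have hx₂ := hSX _ S.end_mem_support
  have hy₁ := hTY _ T.end_mem_support
  have hy₂ := hTY _ T.start_mem_support
  have hX₁ : ∀ z ∈ P₁.support, z ∈ X → z = x₁ := fun z hz =>
    eq_of_mem_of_ne_imp_notMem hXY hy₁ (hint₁ z hz)
  have hX₂ : ∀ z ∈ P₂.support, z ∈ X → z = x₂ := fun z hz =>
    eq_of_mem_of_ne_imp_notMem hXY hy₂ (hint₂ z hz)
  have hY₁ : ∀ z ∈ P₁.support, z ∈ Y → z = y₁ := fun z hz =>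
    eq_of_mem_of_ne_imp_notMem hXY.symm hx₁ fun h₁ h₂ => (hint₁ z hz h₂ h₁).symm
  have hY₂ : ∀ z ∈ P₂.support, z ∈ Y → z = y₂ := fun z hz =>
    eq_of_mem_of_ne_imp_notMem hXY.symm hx₂ fun h₁ h₂ => (hint₂ z hz h₂ h₁).symm
  have hTP₁ : (T.append P₁.reverse).IsPath := hT.append_of_meet hP₁.reverse fun z hzT hzP =>
    hY₁ z (by simpa using hzP) (hTY z hzT)
  have hQ : (P₂.append (T.append P₁.reverse)).IsPath := hP₂.append_of_meet hTP₁ fun z hzP hz => by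
    rw [mem_support_append_iff, support_reverse, List.mem_reverse] at hz
    rcases hz with hzT | hzP₁
    · exact hY₂ z hzP (hTY z hzT)
    · exact absurd hzP (hPP z hzP₁)
  refine hS.isCycle_append_of_meet hQ (fun z hzS hz => ?_) (.inr ?_)
  · rw [mem_support_append_iff, mem_support_append_iff, support_reverse, List.mem_reverse] at hz
    rcases hz with hzP₂ | hzT | hzP₁
    · exact .inr (hX₂ z hzP₂ (hSX z hzS))
    · exact absurd (hTY z hzT) (Set.disjoint_left.1 hXY (hSX z hzS))
    · exact .inl (hX₁ z hzP₁ (hSX z hzS))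
  · have h₁ : P₁.length ≠ 0 := fun h =>
      Set.disjoint_left.1 hXY hx₁ (eq_of_length_eq_zero h ▸ hy₁)
    have h₂ : P₂.length ≠ 0 := fun h =>
      Set.disjoint_left.1 hXY hx₂ (eq_of_length_eq_zero h ▸ hy₂)
    simp only [length_append, length_reverse]
    omega

end SimpleGraph.Walk

/-- Lemma 13: given disjoint cycles `C₁` (Γ₁-non-zero) and `C₂` (Γ₂-non-zero) joined by
two disjoint `C₁`–`C₂`-paths, the union contains a `(Γ₁,Γ₂)`-non-zero cycle. -/
theorem nonzero_cycle_from_two_cycles_and_two_paths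
    {V Γ₁ Γ₂ : Type} [Group Γ₁] [Group Γ₂] (G : SimpleGraph V)
    (γ : V → V → Γ₁ × Γ₂) (hγ : IsLab G γ)
    {a b x₁ y₁ x₂ y₂ : V}
    (C₁ : G.Walk a a) (C₂ : G.Walk b b) (P₁ : G.Walk x₁ y₁) (P₂ : G.Walk x₂ y₂)
    (hC₁ : C₁.IsCycle) (hC₂ : C₂.IsCycle)
    (hCC : ∀ v : V, v ∈ C₁.support → v ∉ C₂.support)
    (hP₁ : P₁.IsPath) (hP₂ : P₂.IsPath)
    (hx₁ : x₁ ∈ C₁.support) (hy₁ : y₁ ∈ C₂.support)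
    (hx₂ : x₂ ∈ C₁.support) (hy₂ : y₂ ∈ C₂.support)
    (hint₁ : ∀ z ∈ P₁.support, z ≠ x₁ → z ≠ y₁ → z ∉ C₁.support ∧ z ∉ C₂.support)
    (hint₂ : ∀ z ∈ P₂.support, z ≠ x₂ → z ≠ y₂ → z ∉ C₁.support ∧ z ∉ C₂.support)
    (hPP : ∀ v : V, v ∈ P₁.support → v ∉ P₂.support)
    (h1 : walkVal (fun p q => (γ p q).1) C₁ ≠ 1)
    (h2 : walkVal (fun p q => (γ p q).2) C₂ ≠ 1) :
    ∃ (w : V) (D : G.Walk w w), D.IsCycle ∧ DNZ γ D ∧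
      ∀ e ∈ D.edges, e ∈ C₁.edges ∨ e ∈ C₂.edges ∨ e ∈ P₁.edges ∨ e ∈ P₂.edges := by
  by_cases hC₂₁ : walkVal (fun p q => (γ p q).1) C₂ = 1
  swap; · exact ⟨b, C₂, hC₂, ⟨hC₂₁, h2⟩, fun e he => .inr (.inl he)⟩
  rw [walkVal_fst] at h1 hC₂₁
  rw [walkVal_snd] at h2
  have hx : x₁ ≠ x₂ := fun h => hPP x₁ P₁.start_mem_support (h ▸ P₂.start_mem_support)
  have hy : y₂ ≠ y₁ := fun h => hPP y₁ P₁.end_mem_support (h ▸ P₂.end_mem_support)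
  obtain ⟨p, p', hpC, hpp'⟩ := hC₁.exists_arcs_isConj hγ hx₁ hx₂ hx
  obtain ⟨q, q', hqC, hqq'⟩ := hC₂.exists_arcs_isConj hγ hy₂ hy₁ hy
  obtain ⟨S, hS, T, hT, hD₁, hD₂⟩ := exists_fst_ne_one_and_snd_ne_one (walkVal γ) (walkVal γ)
    ((Prod.fst_eq_fst_iff_of_isConj hpp').not.2 h1)
    ((Prod.fst_eq_fst_iff_of_isConj hqq').2 hC₂₁) ((Prod.snd_eq_snd_iff_of_isConj hqq').not.2 h2)
    (walkVal γ P₂) (walkVal γ P₁)⁻¹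
  obtain ⟨hS, hSC⟩ := hpC S hS
  obtain ⟨hT, hTC⟩ := hqC T hT
  refine ⟨x₁, _, Walk.IsPath.isCycle_append_append_append_reverse (Set.disjoint_left.2 hCC)
    hS hT hP₁ hP₂ (Walk.support_subset_of_toSubgraph_le hSC)
    (Walk.support_subset_of_toSubgraph_le hTC) hint₁ hint₂ hPP, ?_, fun e he => ?_⟩
  · rw [DNZ, walkVal_fst, walkVal_snd]
    simp only [walkVal_append, walkVal_reverse hγ, ← mul_assoc]
    exact ⟨hD₁, hD₂⟩
  · simp only [Walk.edges_append, Walk.edges_reverse, List.mem_append, List.mem_reverse] at he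
    rcases he with h | h | h | h
    exacts [.inl (Walk.edges_subset_of_toSubgraph_le hSC h), .inr (.inr (.inr h)),
      .inr (.inl (Walk.edges_subset_of_toSubgraph_le hTC h)), .inr (.inr (.inl h))]
end

section
/- Let t be a positive integer and L a linearly ordered set. Let ℱ be a family of t³ pairs (a,b) of elements of L with a < b, such that all 2t³ coordinates appearing in ℱ are pairwise distinct. Then ℱ contains a pure subfamily of size t, i.e., t pairs that are pairwise in series, or t pairs that are pairwise nested, or t pairs that are pairwise crossing. -/
/-- Two pairs (with increasing coordinates) of a linear order are *in series*. -/
def InSeriesP {L : Type} [LinearOrder L] (p q : L × L) : Prop :=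
  p.2 < q.1 ∨ q.2 < p.1

/-- Two pairs (with increasing coordinates) of a linear order are *nested*. -/
def NestedP {L : Type} [LinearOrder L] (p q : L × L) : Prop :=
  (p.1 < q.1 ∧ q.2 < p.2) ∨ (q.1 < p.1 ∧ p.2 < q.2)

/-- Two pairs (with increasing coordinates) of a linear order are *crossing*. -/
def CrossingP {L : Type} [LinearOrder L] (p q : L × L) : Prop :=
  (p.1 < q.1 ∧ q.1 < p.2 ∧ p.2 < q.2) ∨ (q.1 < p.1 ∧ p.1 < q.2 ∧ q.2 < p.2)

/-!
Apply Mirsky's theorem (a finite strict order with more than `(n - 1) m` elements has a chain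
of size `n` or an antichain of size `m`) twice. For the order "`p` encloses `q`", `t³ > (t - 1) t²`
gives `t` pairwise nested pairs or `t²` pairs no two of which are nested. On the latter, for the
order "`p` lies left of `q`", `t² > (t - 1) t` gives `t` pairs in series or `t` pairs that are
pairwise neither nested nor in series, which, all coordinates being distinct, means crossing.
-/

open Finset

section Mirsky

variable {α : Type*} (r : α → α → Prop)

noncomputable def minimalElements (s : Finset α) : Finset α := by
  classical exact {x ∈ s | ∀ y ∈ s, ¬ r y x}

variable {r} {s : Finset α}

lemma mem_minimalElements {x : α} :
    x ∈ minimalElements r s ↔ x ∈ s ∧ ∀ y ∈ s, ¬ r y x := by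
  classical
  simp [minimalElements]

lemma minimalElements_subset : minimalElements r s ⊆ s :=
  fun _ hx ↦ (mem_minimalElements.1 hx).1

lemma isAntichain_minimalElements : IsAntichain r (minimalElements r s : Set α) :=
  fun _ hx _ hy _ ↦ (mem_minimalElements.1 hy).2 _ (mem_minimalElements.1 hx).1

variable [IsStrictOrder α r]

lemma minimalElements_nonempty (hs : s.Nonempty) : (minimalElements r s).Nonempty := by
  obtain ⟨x, hx, hmin⟩ :=
    (Set.wellFoundedOn_iff.1 (s.finite_toSet.wellFoundedOn (r := r))).has_min (s : Set α) hs
  exact ⟨x, mem_minimalElements.2 ⟨hx, fun y hy hyx ↦ hmin y hy ⟨hyx, hy, hx⟩⟩⟩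

lemma exists_mem_minimalElements_rel {y : α} (hys : y ∈ s) (hy : y ∉ minimalElements r s) :
    ∃ x ∈ minimalElements r s, r x y := by
  classical
  obtain ⟨z, hzs, hzy⟩ : ∃ z ∈ s, r z y := by simpa [mem_minimalElements, hys] using hy
  obtain ⟨x, hx⟩ :=
    minimalElements_nonempty (r := r) (s := {w ∈ s | r w y}) ⟨z, mem_filter.2 ⟨hzs, hzy⟩⟩
  simp only [mem_minimalElements, mem_filter] at hx
  obtain ⟨⟨hxs, hxy⟩, hmin⟩ := hx
  exact ⟨x, mem_minimalElements.2 ⟨hxs, fun w hws hwx ↦ hmin w ⟨hws, _root_.trans hwx hxy⟩ hwx⟩,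
    hxy⟩

lemma exists_mem_minimalElements_forall_rel {c : Finset α} (hcs : c ⊆ s)
    (hc : Disjoint c (minimalElements r s)) (hchain : IsChain r (c : Set α)) (hne : c.Nonempty) :
    ∃ x ∈ minimalElements r s, ∀ z ∈ c, r x z := by
  obtain ⟨y, hy⟩ := minimalElements_nonempty (r := r) hne
  obtain ⟨hyc, hy⟩ := mem_minimalElements.1 hy
  obtain ⟨x, hx, hxy⟩ := exists_mem_minimalElements_rel (hcs hyc) (disjoint_left.1 hc hyc)
  refine ⟨x, hx, fun z hz ↦ ?_⟩
  obtain rfl | hyz := eq_or_ne y z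
  · exact hxy
  · exact _root_.trans hxy ((hchain hyc hz hyz).resolve_right (hy z hz))

variable (r) in
theorem exists_isChain_or_isAntichain_of_mul_lt_card (m n : ℕ) (s : Finset α) (hs : n * m < #s) :
    (∃ c ⊆ s, #c = n + 1 ∧ IsChain r (c : Set α)) ∨
      ∃ a ⊆ s, #a = m ∧ IsAntichain r (a : Set α) := by
  classical
  induction n generalizing s with
  | zero =>
    obtain ⟨x, hx⟩ := card_pos.1 (by simpa using hs)
    exact .inl ⟨{x}, singleton_subset_iff.2 hx, rfl, by simp⟩
  | succ n ih =>
    by_cases hB : m ≤ #(minimalElements r s)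
    · obtain ⟨a, haB, ha⟩ := exists_subset_card_eq hB
      exact .inr ⟨a, haB.trans minimalElements_subset, ha,
        isAntichain_minimalElements.subset (coe_subset.2 haB)⟩
    have hcard : n * m < #(s \ minimalElements r s) := by
      rw [card_sdiff_of_subset minimalElements_subset]
      rw [Nat.succ_mul] at hs
      omega
    obtain ⟨c, hc, hcn, hchain⟩ | ⟨a, ha, ham, hanti⟩ := ih (s \ minimalElements r s) hcard
    · obtain ⟨hcs, hcB⟩ := subset_sdiff.1 hc
      obtain ⟨x, hxB, hxc⟩ :=
        exists_mem_minimalElements_forall_rel hcs hcB hchain (card_pos.1 (by omega))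
      refine .inl ⟨insert x c, insert_subset (minimalElements_subset hxB) hcs, ?_, ?_⟩
      · rw [card_insert_of_notMem (disjoint_right.1 hcB hxB), hcn]
      · rw [coe_insert]
        exact hchain.insert fun z hz _ ↦ .inl (hxc z hz)
    · exact .inr ⟨a, ha.trans sdiff_subset, ham, hanti⟩

end Mirsky

lemma crossingP_of_not_inSeriesP_of_not_nestedP {L : Type} [LinearOrder L] {p q : L × L}
    (h₁₁ : p.1 ≠ q.1) (h₂₂ : p.2 ≠ q.2) (h₁₂ : p.1 ≠ q.2) (h₂₁ : p.2 ≠ q.1)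
    (hs : ¬ InSeriesP p q) (hn : ¬ NestedP p q) : CrossingP p q := by
  unfold InSeriesP NestedP CrossingP at *
  grind

theorem pure_subfamily_of_pairs_general
    {L : Type} [LinearOrder L] (t : ℕ)
    (F : Fin (t ^ 3) → L × L)
    (hlt : ∀ i, (F i).1 < (F i).2)
    (hinj : Function.Injective fun x : Fin (t ^ 3) × Bool =>
      if x.2 then (F x.1).2 else (F x.1).1) :
    ∃ s : Finset (Fin (t ^ 3)), s.card = t ∧
      ((∀ i ∈ s, ∀ j ∈ s, i ≠ j → InSeriesP (F i) (F j)) ∨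
       (∀ i ∈ s, ∀ j ∈ s, i ≠ j → NestedP (F i) (F j)) ∨
       (∀ i ∈ s, ∀ j ∈ s, i ≠ j → CrossingP (F i) (F j))) := by
  obtain _ | u := t
  · exact ⟨∅, rfl, .inl fun i hi ↦ absurd hi (notMem_empty i)⟩
  let Encloses : Fin ((u + 1) ^ 3) → Fin ((u + 1) ^ 3) → Prop :=
    fun i j ↦ (F i).1 < (F j).1 ∧ (F j).2 < (F i).2
  let Precedes : Fin ((u + 1) ^ 3) → Fin ((u + 1) ^ 3) → Prop := fun i j ↦ (F i).2 < (F j).1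
  have : IsStrictOrder _ Encloses :=
    { irrefl := fun _ h ↦ h.1.false
      trans := fun _ _ _ h h' ↦ ⟨h.1.trans h'.1, h'.2.trans h.2⟩ }
  have : IsStrictOrder _ Precedes :=
    { irrefl := fun i h ↦ (h.trans (hlt i)).false
      trans := fun _ _ _ h h' ↦ h.trans ((hlt _).trans h') }
  obtain ⟨c, -, hc, hchain⟩ | ⟨A, -, hA, hAnti⟩ :=
    exists_isChain_or_isAntichain_of_mul_lt_card Encloses ((u + 1) ^ 2) u univ
      (by rw [card_univ, Fintype.card_fin]; ring_nf; omega)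
  · exact ⟨c, hc, .inr (.inl hchain)⟩
  obtain ⟨c, -, hc, hchain⟩ | ⟨a, haA, ha, haAnti⟩ :=
    exists_isChain_or_isAntichain_of_mul_lt_card Precedes (u + 1) u A (by rw [hA]; ring_nf; omega)
  · exact ⟨c, hc, .inl hchain⟩
  have hne : ∀ {i j}, i ≠ j → ∀ b b' : Bool,
      (if b then (F i).2 else (F i).1) ≠ (if b' then (F j).2 else (F j).1) :=
    fun {i j} hij b b' ↦ hinj.ne (a₁ := (i, b)) (a₂ := (j, b')) fun h ↦ hij (congrArg Prod.fst h)
  exact ⟨a, ha, .inr (.inr fun i hi j hj hij ↦ crossingP_of_not_inSeriesP_of_not_nestedP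
    (hne hij false false) (hne hij true true) (hne hij false true) (hne hij true false)
    (not_or.2 ⟨haAnti hi hj hij, haAnti hj hi hij.symm⟩)
    (not_or.2 ⟨hAnti (haA hi) (haA hj) hij, hAnti (haA hj) (haA hi) hij.symm⟩))⟩

/-- Lemma 15: every family of `t³` pairs of a linear order, with increasing coordinates
and all `2t³` coordinates pairwise distinct, contains a pure subfamily of size `t`:
`t` pairs pairwise in series, pairwise nested, or pairwise crossing. -/
theorem pure_subfamily_of_pairs
    {L : Type} [LinearOrder L] (t : ℕ) (ht : 0 < t)
    (F : Fin (t ^ 3) → L × L)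
    (hlt : ∀ i, (F i).1 < (F i).2)
    (hinj : Function.Injective fun x : Fin (t ^ 3) × Bool =>
      if x.2 then (F x.1).2 else (F x.1).1) :
    ∃ s : Finset (Fin (t ^ 3)), s.card = t ∧
      ((∀ i ∈ s, ∀ j ∈ s, i ≠ j → InSeriesP (F i) (F j)) ∨
       (∀ i ∈ s, ∀ j ∈ s, i ≠ j → NestedP (F i) (F j)) ∨
       (∀ i ∈ s, ∀ j ∈ s, i ≠ j → CrossingP (F i) (F j))) :=
  pure_subfamily_of_pairs_general t F hlt hinj
end

section
/- Let t be a positive integer and L a linearly ordered set. Let 𝒫 and 𝒬 be two pure families of pairs of elements of L, each of size 4t, such that all 16t coordinates appearing in 𝒫 ∪ 𝒬 are pairwise distinct. Then there exist subfamilies 𝒫' ⊆ 𝒫 and 𝒬' ⊆ 𝒬, each of size t, such that: I_{𝒫'} and I_{𝒬'} are disjoint if 𝒫 and 𝒬 are both in series; I_{𝒫'} is disjoint from I_{𝒬'}^ℓ ∪ I_{𝒬'}^r if 𝒫 is in series and 𝒬 is not in series; I_{𝒬'} is disjoint from I_{𝒫'}^ℓ ∪ I_{𝒫'}^r if 𝒬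 is in series and 𝒫 is not in series; and I_{𝒫'}^ℓ, I_{𝒫'}^r, I_{𝒬'}^ℓ, I_{𝒬'}^r are pairwise disjoint if neither 𝒫 nor 𝒬 is in series. -/
set_option maxHeartbeats 1600000
set_option linter.unusedSectionVars false

/-- A family of pairs is in series if its members are pairwise in series. -/
def SeriesFam {L : Type} [LinearOrder L] {n : ℕ} (F : Fin n → L × L) : Prop :=
  ∀ i j, i ≠ j → InSeriesP (F i) (F j)

/-- A family of pairs is pure if its members are pairwise in series, pairwise nested,
or pairwise crossing. -/
def PureFam {L : Type} [LinearOrder L] {n : ℕ} (F : Fin n → L × L) : Prop :=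
  SeriesFam F ∨ (∀ i j, i ≠ j → NestedP (F i) (F j)) ∨
    (∀ i j, i ≠ j → CrossingP (F i) (F j))

/-- The minimal interval (convex hull) containing a set in a linear order. -/
def hull {L : Type} [LinearOrder L] (S : Set L) : Set L :=
  {z | ∃ a ∈ S, ∃ b ∈ S, a ≤ z ∧ z ≤ b}

/-- All endpoints of the pairs of a subfamily. -/
def endsFull {L : Type} [LinearOrder L] {n : ℕ} (F : Fin n → L × L)
    (s : Finset (Fin n)) : Set L :=
  {x | ∃ i ∈ s, x = (F i).1 ∨ x = (F i).2}

/-- All left endpoints of the pairs of a subfamily. -/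
def endsL {L : Type} [LinearOrder L] {n : ℕ} (F : Fin n → L × L)
    (s : Finset (Fin n)) : Set L :=
  {x | ∃ i ∈ s, x = (F i).1}

/-- All right endpoints of the pairs of a subfamily. -/
def endsR {L : Type} [LinearOrder L] {n : ℕ} (F : Fin n → L × L)
    (s : Finset (Fin n)) : Set L :=
  {x | ∃ i ∈ s, x = (F i).2}

open Finset

section Infra

variable {L : Type} [LinearOrder L] {n : ℕ}

/-- Elementwise separation of two sets. -/
def SepLt {L : Type} [LinearOrder L] (A B : Set L) : Prop := ∀ a ∈ A, ∀ b ∈ B, a < b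

lemma SepLt.disjoint_hull {A B : Set L} (h : SepLt A B) : Disjoint (hull A) (hull B) := by
  rw [Set.disjoint_left]
  rintro z ⟨a, ha, b, hb, _, hzb⟩ ⟨c, hc, d, hd, hcz, _⟩
  exact absurd (h b hb c hc) (not_lt.2 (le_trans hcz hzb))

lemma sep_symm_disjoint {A B : Set L} (h : SepLt B A) : Disjoint (hull A) (hull B) :=
  (h.disjoint_hull).symm

lemma pairwise4 {A B C D : Set L} (h1 : Disjoint A B) (h2 : Disjoint A C) (h3 : Disjoint A D)
    (h4 : Disjoint B C) (h5 : Disjoint B D) (h6 : Disjoint C D) :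
    ([A, B, C, D] : List (Set L)).Pairwise Disjoint := by
  simp only [List.pairwise_cons, List.mem_cons, List.not_mem_nil, or_false,
    List.Pairwise.nil, and_true]
  refine ⟨?_, ?_, ?_, ?_⟩
  · rintro s hs
    rcases hs with rfl | rfl | rfl <;> assumption
  · rintro s hs
    rcases hs with rfl | rfl <;> assumption
  · rintro s rfl
    assumption
  · rintro s ⟨⟩

/-- bottom-k selection along an injective score. -/
lemma exists_bottom (f : Fin n → L) (hf : Function.Injective f)
    (S : Finset (Fin n)) (k : ℕ) (hk : k ≤ S.card) :
    ∃ u : Finset (Fin n), u ⊆ S ∧ u.card = k ∧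
      ∀ i ∈ u, ∀ j ∈ S, j ∉ u → f i < f j := by
  induction k with
  | zero => exact ⟨∅, empty_subset _, card_empty, by simp⟩
  | succ k ih =>
      obtain ⟨u, huS, hcard, hlt⟩ := ih (le_trans (Nat.le_succ k) hk)
      have hne : (S \ u).Nonempty := by
        rw [sdiff_nonempty]
        intro hSu
        have := card_le_card hSu
        omega
      obtain ⟨j₀, hj₀, hmin⟩ := Finset.exists_min_image (S \ u) f hne
      rw [mem_sdiff] at hj₀
      refine ⟨insert j₀ u, insert_subset hj₀.1 huS, ?_, ?_⟩
      · rw [card_insert_of_notMem hj₀.2]; omega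
      · intro i hi j hjS hj
        rcases mem_insert.1 hi with rfl | hiu
        · have hjd : j ∈ S \ u := mem_sdiff.2 ⟨hjS, fun hju => hj (mem_insert_of_mem hju)⟩
          rcases lt_or_eq_of_le (hmin j hjd) with h | h
          · exact h
          · exact absurd (hf h).symm (by rintro rfl; exact hj (mem_insert_self _ _))
        · exact hlt i hiu j hjS (fun hju => hj (mem_insert_of_mem hju))

/-- top-k selection along an injective score. -/
lemma exists_top (f : Fin n → L) (hf : Function.Injective f)
    (S : Finset (Fin n)) (k : ℕ) (hk : k ≤ S.card) :
    ∃ u : Finset (Fin n), u ⊆ S ∧ u.card = k ∧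
      ∀ i ∈ u, ∀ j ∈ S, j ∉ u → f j < f i := by
  obtain ⟨u, h1, h2, h3⟩ :=
    exists_bottom (L := Lᵒᵈ) (fun i => OrderDual.toDual (f i))
      (fun a b hab => hf (by simpa using hab)) S k hk
  exact ⟨u, h1, h2, fun i hi j hjS hj => by simpa using h3 i hi j hjS hj⟩

end Infra

section Main

variable {L : Type} [LinearOrder L]

/-- The six disjointness statements between the four hull blocks of two subfamilies. -/
def DisjHulls4 {n : ℕ} (P : Fin n → L × L) (sP : Finset (Fin n))
    (Q : Fin n → L × L) (sQ : Finset (Fin n)) : Prop :=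
  Disjoint (hull (endsL P sP)) (hull (endsR P sP)) ∧
  Disjoint (hull (endsL P sP)) (hull (endsL Q sQ)) ∧
  Disjoint (hull (endsL P sP)) (hull (endsR Q sQ)) ∧
  Disjoint (hull (endsR P sP)) (hull (endsL Q sQ)) ∧
  Disjoint (hull (endsR P sP)) (hull (endsR Q sQ)) ∧
  Disjoint (hull (endsL Q sQ)) (hull (endsR Q sQ))

lemma DisjHulls4.symm {n : ℕ} {P : Fin n → L × L} {sP : Finset (Fin n)}
    {Q : Fin n → L × L} {sQ : Finset (Fin n)} (h : DisjHulls4 P sP Q sQ) :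
    DisjHulls4 Q sQ P sP := by
  obtain ⟨h1, h2, h3, h4, h5, h6⟩ := h
  exact ⟨h6, h2.symm, h4.symm, h3.symm, h5.symm, h1⟩

lemma DisjHulls4.pairwise {n : ℕ} {P : Fin n → L × L} {sP : Finset (Fin n)}
    {Q : Fin n → L × L} {sQ : Finset (Fin n)} (h : DisjHulls4 P sP Q sQ) :
    ([hull (endsL P sP), hull (endsR P sP),
      hull (endsL Q sQ), hull (endsR Q sQ)] : List (Set L)).Pairwise Disjoint := by
  obtain ⟨h1, h2, h3, h4, h5, h6⟩ := h
  exact pairwise4 h1 h2 h3 h4 h5 h6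

end Main


section Helpers

variable {L : Type} [LinearOrder L] {n : ℕ}

lemma sep_LL {P Q : Fin n → L × L} {sP sQ : Finset (Fin n)}
    (h : ∀ i ∈ sP, ∀ j ∈ sQ, (P i).1 < (Q j).1) :
    Disjoint (hull (endsL P sP)) (hull (endsL Q sQ)) := by
  apply SepLt.disjoint_hull
  rintro a ⟨i, hi, rfl⟩ b ⟨j, hj, rfl⟩
  exact h i hi j hj

lemma sep_LR {P Q : Fin n → L × L} {sP sQ : Finset (Fin n)}
    (h : ∀ i ∈ sP, ∀ j ∈ sQ, (P i).1 < (Q j).2) :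
    Disjoint (hull (endsL P sP)) (hull (endsR Q sQ)) := by
  apply SepLt.disjoint_hull
  rintro a ⟨i, hi, rfl⟩ b ⟨j, hj, rfl⟩
  exact h i hi j hj

lemma sep_RL {P Q : Fin n → L × L} {sP sQ : Finset (Fin n)}
    (h : ∀ i ∈ sP, ∀ j ∈ sQ, (P i).2 < (Q j).1) :
    Disjoint (hull (endsR P sP)) (hull (endsL Q sQ)) := by
  apply SepLt.disjoint_hull
  rintro a ⟨i, hi, rfl⟩ b ⟨j, hj, rfl⟩
  exact h i hi j hj

lemma sep_RR {P Q : Fin n → L × L} {sP sQ : Finset (Fin n)}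
    (h : ∀ i ∈ sP, ∀ j ∈ sQ, (P i).2 < (Q j).2) :
    Disjoint (hull (endsR P sP)) (hull (endsR Q sQ)) := by
  apply SepLt.disjoint_hull
  rintro a ⟨i, hi, rfl⟩ b ⟨j, hj, rfl⟩
  exact h i hi j hj

lemma sep_RL' {P Q : Fin n → L × L} {sP sQ : Finset (Fin n)}
    (h : ∀ i ∈ sP, ∀ j ∈ sQ, (Q j).1 < (P i).2) :
    Disjoint (hull (endsR P sP)) (hull (endsL Q sQ)) := by
  apply sep_symm_disjoint
  rintro a ⟨j, hj, rfl⟩ b ⟨i, hi, rfl⟩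
  exact h i hi j hj

lemma sep_LL' {P Q : Fin n → L × L} {sP sQ : Finset (Fin n)}
    (h : ∀ i ∈ sP, ∀ j ∈ sQ, (Q j).1 < (P i).1) :
    Disjoint (hull (endsL P sP)) (hull (endsL Q sQ)) := by
  apply sep_symm_disjoint
  rintro a ⟨j, hj, rfl⟩ b ⟨i, hi, rfl⟩
  exact h i hi j hj

lemma sep_LR' {P Q : Fin n → L × L} {sP sQ : Finset (Fin n)}
    (h : ∀ i ∈ sP, ∀ j ∈ sQ, (Q j).2 < (P i).1) :
    Disjoint (hull (endsL P sP)) (hull (endsR Q sQ)) := by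
  apply sep_symm_disjoint
  rintro a ⟨j, hj, rfl⟩ b ⟨i, hi, rfl⟩
  exact h i hi j hj

lemma sep_RR' {P Q : Fin n → L × L} {sP sQ : Finset (Fin n)}
    (h : ∀ i ∈ sP, ∀ j ∈ sQ, (Q j).2 < (P i).2) :
    Disjoint (hull (endsR P sP)) (hull (endsR Q sQ)) := by
  apply sep_symm_disjoint
  rintro a ⟨j, hj, rfl⟩ b ⟨i, hi, rfl⟩
  exact h i hi j hj

/-- blocks inside the two families plus four cross disjointnesses give DisjHulls4. -/
lemma build4 {P Q : Fin n → L × L} {sP sQ : Finset (Fin n)}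
    (hPb : ∀ i j, (P i).1 < (P j).2) (hQb : ∀ i j, (Q i).1 < (Q j).2)
    (h2 : Disjoint (hull (endsL P sP)) (hull (endsL Q sQ)))
    (h3 : Disjoint (hull (endsL P sP)) (hull (endsR Q sQ)))
    (h4 : Disjoint (hull (endsR P sP)) (hull (endsL Q sQ)))
    (h5 : Disjoint (hull (endsR P sP)) (hull (endsR Q sQ))) :
    DisjHulls4 P sP Q sQ := by
  refine ⟨?_, h2, h3, h4, h5, ?_⟩
  · apply SepLt.disjoint_hull
    rintro a ⟨i, hi, rfl⟩ b ⟨j, hj, rfl⟩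
    exact hPb i j
  · apply SepLt.disjoint_hull
    rintro a ⟨i, hi, rfl⟩ b ⟨j, hj, rfl⟩
    exact hQb i j

/-- middle window selection: a low part `w` of size `a` and a window `u` of size `b`. -/
lemma exists_window (f : Fin n → L) (hf : Function.Injective f)
    (S : Finset (Fin n)) (a b : ℕ) (hab : a + b ≤ S.card) :
    ∃ w u : Finset (Fin n), w ⊆ S ∧ u ⊆ S ∧ Disjoint w u ∧ w.card = a ∧ u.card = b ∧
      (∀ i ∈ w, ∀ j ∈ u, f i < f j) ∧
      (∀ i ∈ u, ∀ j ∈ S, j ∉ w → j ∉ u → f i < f j) ∧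
      (∀ i ∈ w, ∀ j ∈ S, j ∉ w → j ∉ u → f i < f j) := by
  obtain ⟨v, hvS, hvcard, hv⟩ := exists_bottom f hf S (a + b) hab
  obtain ⟨u, huv, hucard, hu⟩ := exists_top f hf v b (by omega)
  refine ⟨v \ u, u, (sdiff_subset).trans hvS, huv.trans hvS, sdiff_disjoint, ?_, hucard,
    ?_, ?_, ?_⟩
  · rw [card_sdiff_of_subset huv]; omega
  · intro i hi j hj
    exact hu j hj i (mem_sdiff.1 hi).1 (mem_sdiff.1 hi).2
  · intro i hiu j hjS hjw hju
    have hjv : j ∉ v := by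
      intro hjv
      exact hjw (mem_sdiff.2 ⟨hjv, hju⟩)
    exact hv i (huv hiu) j hjS hjv
  · intro i hiw j hjS hjw hju
    have hjv : j ∉ v := by
      intro hjv
      exact hjw (mem_sdiff.2 ⟨hjv, hju⟩)
    exact hv i (mem_sdiff.1 hiw).1 j hjS hjv

end Helpers


section Master

variable {L : Type} [LinearOrder L] {n : ℕ}

/-- Master lemma, provider `R` nested.  `S` is the points side.  The families straddle a
common cut (hypothesis `hcross`).  Produces separated subfamilies of size `t`. -/
lemma master_nested (t : ℕ) (ht : 0 < t)
    (R S : Fin n → L × L)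
    (hRb : ∀ i j, (R i).1 < (R j).2) (hSb : ∀ i j, (S i).1 < (S j).2)
    (hRnest : ∀ i j, (R i).1 < (R j).1 → (R j).2 < (R i).2)
    (hRlinj : Function.Injective fun i : Fin n => (R i).1)
    (hSlinj : Function.Injective fun i : Fin n => (S i).1)
    (hxl : ∀ i j, (R i).1 ≠ (S j).1) (hxr : ∀ i j, (R i).2 ≠ (S j).2)
    (SR SS : Finset (Fin n))
    (hcross : ∀ i ∈ SR, ∀ j ∈ SS, (R i).1 < (S j).2 ∧ (S j).1 < (R i).2)
    (hmR : 3 * t - 2 ≤ SR.card)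
    (hbig : 4 * t - 3 ≤ SS.card ∨
      ((∀ i j, (S i).1 < (S j).1 → (S j).2 < (S i).2) ∧ 3 * t - 2 ≤ SS.card)) :
    ∃ sS sR : Finset (Fin n), sS.card = t ∧ sR.card = t ∧ DisjHulls4 S sS R sR := by
  classical
  set m := SR.card with hm
  have htm : t ≤ m := by omega
  have hpm : ∀ j, (SR.filter fun i => (R i).1 < (S j).1).card ≤ m :=
    fun j => card_le_card (filter_subset _ _)
  have hqm : ∀ j, (SR.filter fun i => (R i).2 < (S j).2).card ≤ m :=
    fun j => card_le_card (filter_subset _ _)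
  -- the four classes
  set K1 : Finset (Fin n) := SS.filter (fun j =>
    (SR.filter fun i => (R i).1 < (S j).1).card ≤ m - t ∧
    t ≤ (SR.filter fun i => (R i).2 < (S j).2).card) with hK1
  set K2 : Finset (Fin n) := SS.filter (fun j =>
    t ≤ (SR.filter fun i => (R i).1 < (S j).1).card ∧
    (SR.filter fun i => (R i).2 < (S j).2).card ≤ m - t) with hK2
  set K3 : Finset (Fin n) := SS.filter (fun j =>
    m - t + 1 ≤ (SR.filter fun i => (R i).1 < (S j).1).card ∧
    m - t + 1 ≤ (SR.filter fun i => (R i).2 < (S j).2).card) with hK3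
  set K4 : Finset (Fin n) := SS.filter (fun j =>
    (SR.filter fun i => (R i).1 < (S j).1).card ≤ t - 1 ∧
    (SR.filter fun i => (R i).2 < (S j).2).card ≤ t - 1) with hK4
  have hcover : SS ⊆ K1 ∪ K2 ∪ K3 ∪ K4 := by
    intro j hj
    have h1 := hpm j; have h2 := hqm j
    simp only [hK1, hK2, hK3, hK4, mem_union, mem_filter]
    have hor : ((SR.filter fun i => (R i).1 < (S j).1).card ≤ m - t ∧
          t ≤ (SR.filter fun i => (R i).2 < (S j).2).card) ∨
        (t ≤ (SR.filter fun i => (R i).1 < (S j).1).card ∧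
          (SR.filter fun i => (R i).2 < (S j).2).card ≤ m - t) ∨
        (m - t + 1 ≤ (SR.filter fun i => (R i).1 < (S j).1).card ∧
          m - t + 1 ≤ (SR.filter fun i => (R i).2 < (S j).2).card) ∨
        ((SR.filter fun i => (R i).1 < (S j).1).card ≤ t - 1 ∧
          (SR.filter fun i => (R i).2 < (S j).2).card ≤ t - 1) := by omega
    tauto
  -- some class of size ≥ t
  have hbigclass : t ≤ K1.card ∨ t ≤ K2.card ∨ t ≤ K3.card ∨ t ≤ K4.card := by
    by_contra hcon
    push_neg at hcon
    obtain ⟨c1, c2, c3, c4⟩ := hcon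
    have hsum : SS.card ≤ K1.card + K2.card + K3.card + K4.card := by
      calc SS.card ≤ (K1 ∪ K2 ∪ K3 ∪ K4).card := card_le_card hcover
        _ ≤ (K1 ∪ K2 ∪ K3).card + K4.card := card_union_le _ _
        _ ≤ (K1 ∪ K2).card + K3.card + K4.card := by
              have := card_union_le (K1 ∪ K2) K3; omega
        _ ≤ K1.card + K2.card + K3.card + K4.card := by
              have := card_union_le K1 K2; omega
    rcases hbig with hbig | ⟨hSnest, hbig⟩
    · omega
    · -- exclusivity of K3 and K4
      have hexcl : K3 = ∅ ∨ K4 = ∅ := by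
        by_contra hcon2
        push_neg at hcon2
        obtain ⟨j, hj⟩ := hcon2.1
        obtain ⟨j', hj'⟩ := hcon2.2
        rw [hK3, mem_filter] at hj
        rw [hK4, mem_filter] at hj'
        have hll : (S j').1 < (S j).1 := by
          rcases lt_trichotomy ((S j').1) ((S j).1) with h | h | h
          · exact h
          · exact absurd (hSlinj h) (by rintro rfl; omega)
          · have hmono : (SR.filter fun i => (R i).1 < (S j).1).card ≤
                (SR.filter fun i => (R i).1 < (S j').1).card := by
              apply card_le_card
              intro i hi
              rw [mem_filter] at hi ⊢
              exact ⟨hi.1, lt_trans hi.2 h⟩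
            omega
        have hrr : (S j).2 < (S j').2 := hSnest _ _ hll
        have hmono : (SR.filter fun i => (R i).2 < (S j).2).card ≤
            (SR.filter fun i => (R i).2 < (S j').2).card := by
          apply card_le_card
          intro i hi
          rw [mem_filter] at hi ⊢
          exact ⟨hi.1, lt_trans hi.2 hrr⟩
        omega
      rcases hexcl with he | he <;> rw [he] at hsum <;> simp at hsum <;> omega
  -- helper : build the conclusion once a class and window are chosen
  have hbuild : ∀ (K u : Finset (Fin n)), K ⊆ SS → u ⊆ SR → t ≤ K.card → u.card = t →
      ((∀ j ∈ K, ∀ i ∈ u, (S j).1 < (R i).1) ∨ (∀ j ∈ K, ∀ i ∈ u, (R i).1 < (S j).1)) →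
      ((∀ j ∈ K, ∀ i ∈ u, (S j).2 < (R i).2) ∨ (∀ j ∈ K, ∀ i ∈ u, (R i).2 < (S j).2)) →
      ∃ sS sR : Finset (Fin n), sS.card = t ∧ sR.card = t ∧ DisjHulls4 S sS R sR := by
    intro K u hKS huR hK hu hdir1 hdir2
    obtain ⟨sS, hsSK, hsScard⟩ := Finset.exists_subset_card_eq (s := K) (n := t) hK
    refine ⟨sS, u, hsScard, hu, ?_⟩
    have hLL : Disjoint (hull (endsL S sS)) (hull (endsL R u)) := by
      rcases hdir1 with h | h
      · exact sep_LL (fun j hj i hi => h j (hsSK hj) i hi)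
      · exact sep_LL' (fun j hj i hi => h j (hsSK hj) i hi)
    have hRR : Disjoint (hull (endsR S sS)) (hull (endsR R u)) := by
      rcases hdir2 with h | h
      · exact sep_RR (fun j hj i hi => h j (hsSK hj) i hi)
      · exact sep_RR' (fun j hj i hi => h j (hsSK hj) i hi)
    refine build4 hSb hRb hLL ?_ ?_ hRR
    · exact sep_LR (fun j hj i hi => (hcross i (huR hi) j (hKS (hsSK hj))).2)
    · exact sep_RL' (fun j hj i hi => (hcross i (huR hi) j (hKS (hsSK hj))).1)
  rcases hbigclass with hK | hK | hK | hK
  · -- K1 : p ≤ m - t, q ≥ t ; window = top t by left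
    obtain ⟨u, huR, hucard, hut⟩ :=
      exists_top (fun i => (R i).1) hRlinj SR t htm
    refine hbuild K1 u (filter_subset _ _) huR hK hucard (Or.inl ?_) (Or.inr ?_)
    · intro j hj i hi
      rw [hK1, mem_filter] at hj
      by_contra hcon
      have hlt : (R i).1 < (S j).1 :=
        lt_of_le_of_ne (not_lt.1 hcon) (hxl i j)
      have hsub : (SR \ u) ∪ {i} ⊆ SR.filter fun i' => (R i').1 < (S j).1 := by
        intro i' hi'
        rcases mem_union.1 hi' with hi' | hi'
        · rw [mem_sdiff] at hi'
          exact mem_filter.2 ⟨hi'.1, lt_trans (hut i hi i' hi'.1 hi'.2) hlt⟩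
        · rw [mem_singleton.1 hi']
          exact mem_filter.2 ⟨huR hi, hlt⟩
      have h1 := card_le_card hsub
      rw [card_union_of_disjoint (by
          simp only [disjoint_singleton_right, mem_sdiff, not_and, not_not]
          exact fun _ => hi),
        card_sdiff_of_subset huR, card_singleton, hucard] at h1
      omega
    · intro j hj i hi
      rw [hK1, mem_filter] at hj
      by_contra hcon
      have hlt : (S j).2 < (R i).2 :=
        lt_of_le_of_ne (not_lt.1 hcon) (fun h => hxr i j h.symm)
      have hsub : (SR.filter fun i' => (R i').2 < (S j).2) ⊆ u.erase i := by
        intro i'' hi''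
        rw [mem_filter] at hi''
        have h2 : (R i'').2 < (R i).2 := lt_trans hi''.2 hlt
        have hiu : i'' ∈ u := by
          by_contra hne
          exact absurd h2 (not_lt.2 (hRnest i'' i (hut i hi i'' hi''.1 hne)).le)
        exact mem_erase.2 ⟨fun h => (by rw [h] at h2; exact lt_irrefl _ h2), hiu⟩
      have h1 := card_le_card hsub
      rw [card_erase_of_mem hi, hucard] at h1
      omega
  · -- K2 : p ≥ t, q ≤ m - t ; window = bottom t by left
    obtain ⟨u, huR, hucard, hut⟩ :=
      exists_bottom (fun i => (R i).1) hRlinj SR t htm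
    refine hbuild K2 u (filter_subset _ _) huR hK hucard (Or.inr ?_) (Or.inl ?_)
    · intro j hj i hi
      rw [hK2, mem_filter] at hj
      by_contra hcon
      have hlt : (S j).1 < (R i).1 :=
        lt_of_le_of_ne (not_lt.1 hcon) (fun h => hxl i j h.symm)
      have hsub : (SR.filter fun i' => (R i').1 < (S j).1) ⊆ u.erase i := by
        intro i'' hi''
        rw [mem_filter] at hi''
        have h2 : (R i'').1 < (R i).1 := lt_trans hi''.2 hlt
        have hiu : i'' ∈ u := by
          by_contra hne
          exact absurd h2 (not_lt.2 (hut i hi i'' hi''.1 hne).le)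
        exact mem_erase.2 ⟨fun h => (by rw [h] at h2; exact lt_irrefl _ h2), hiu⟩
      have h1 := card_le_card hsub
      rw [card_erase_of_mem hi, hucard] at h1
      omega
    · intro j hj i hi
      rw [hK2, mem_filter] at hj
      by_contra hcon
      have hlt : (R i).2 < (S j).2 :=
        lt_of_le_of_ne (not_lt.1 hcon) (hxr i j)
      have hsub : (SR \ u) ∪ {i} ⊆ SR.filter fun i' => (R i').2 < (S j).2 := by
        intro i' hi'
        rcases mem_union.1 hi' with hi' | hi'
        · rw [mem_sdiff] at hi'
          exact mem_filter.2 ⟨hi'.1,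
            lt_trans (hRnest i i' (hut i hi i' hi'.1 hi'.2)) hlt⟩
        · rw [mem_singleton.1 hi']
          exact mem_filter.2 ⟨huR hi, hlt⟩
      have h1 := card_le_card hsub
      rw [card_union_of_disjoint (by
          simp only [disjoint_singleton_right, mem_sdiff, not_and, not_not]
          exact fun _ => hi),
        card_sdiff_of_subset huR, card_singleton, hucard] at h1
      omega
  · -- K3 : p ≥ m-t+1, q ≥ m-t+1 ; window at offset m-2t+1
    obtain ⟨w, u, hwR, huR, hwu, hwcard, hucard, hwlt, hurest, hwrest⟩ :=
      exists_window (fun i => (R i).1) hRlinj SR (m - (2 * t - 1)) t (by omega)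
    refine hbuild K3 u (filter_subset _ _) huR hK hucard (Or.inr ?_) (Or.inr ?_)
    · intro j hj i hi
      rw [hK3, mem_filter] at hj
      by_contra hcon
      have hlt : (S j).1 < (R i).1 :=
        lt_of_le_of_ne (not_lt.1 hcon) (fun h => hxl i j h.symm)
      have hsub : (SR.filter fun i' => (R i').1 < (S j).1) ⊆ w ∪ u.erase i := by
        intro i'' hi''
        rw [mem_filter] at hi''
        have h2 : (R i'').1 < (R i).1 := lt_trans hi''.2 hlt
        by_cases hw : i'' ∈ w
        · exact mem_union_left _ hw
        · have hiu : i'' ∈ u := by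
            by_contra hne
            exact absurd h2 (not_lt.2 (hurest i hi i'' hi''.1 hw hne).le)
          exact mem_union_right _
            (mem_erase.2 ⟨fun h => (by rw [h] at h2; exact lt_irrefl _ h2), hiu⟩)
      have h1 := card_le_card hsub
      have h2 := card_union_le w (u.erase i)
      rw [card_erase_of_mem hi, hucard, hwcard] at h2
      omega
    · intro j hj i hi
      rw [hK3, mem_filter] at hj
      by_contra hcon
      have hlt : (S j).2 < (R i).2 :=
        lt_of_le_of_ne (not_lt.1 hcon) (fun h => hxr i j h.symm)
      have hsub : (SR.filter fun i' => (R i').2 < (S j).2) ⊆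
          (SR \ (w ∪ u)) ∪ u.erase i := by
        intro i'' hi''
        rw [mem_filter] at hi''
        have h2 : (R i'').2 < (R i).2 := lt_trans hi''.2 hlt
        have hll : (R i).1 < (R i'').1 := by
          rcases lt_trichotomy ((R i).1) ((R i'').1) with h | h | h
          · exact h
          · rw [hRlinj h] at h2; exact absurd h2 (lt_irrefl _)
          · exact absurd h2 (not_lt.2 (hRnest _ _ h).le)
        have hnw : i'' ∉ w := by
          intro hw
          exact absurd (hwlt i'' hw i hi) (not_lt.2 hll.le)
        by_cases hu2 : i'' ∈ u
        · exact mem_union_right _ (mem_erase.2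
            ⟨fun h => (by rw [h] at h2; exact lt_irrefl _ h2), hu2⟩)
        · exact mem_union_left _ (mem_sdiff.2 ⟨hi''.1, by
            simp only [mem_union]; tauto⟩)
      have h1 := card_le_card hsub
      have h2 := card_union_le (SR \ (w ∪ u)) (u.erase i)
      have h3 : (SR \ (w ∪ u)).card = m - (m - (2 * t - 1)) - t := by
        rw [card_sdiff_of_subset (union_subset hwR huR),
          card_union_of_disjoint hwu, hwcard, hucard]
        omega
      rw [card_erase_of_mem hi, hucard] at h2
      omega
  · -- K4 : p ≤ t-1, q ≤ t-1 ; window at offset t-1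
    obtain ⟨w, u, hwR, huR, hwu, hwcard, hucard, hwlt, hurest, hwrest⟩ :=
      exists_window (fun i => (R i).1) hRlinj SR (t - 1) t (by omega)
    refine hbuild K4 u (filter_subset _ _) huR hK hucard (Or.inl ?_) (Or.inl ?_)
    · intro j hj i hi
      rw [hK4, mem_filter] at hj
      by_contra hcon
      have hlt : (R i).1 < (S j).1 :=
        lt_of_le_of_ne (not_lt.1 hcon) (hxl i j)
      have hsub : w ∪ {i} ⊆ SR.filter fun i' => (R i').1 < (S j).1 := by
        intro i' hi'
        rcases mem_union.1 hi' with hi' | hi'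
        · exact mem_filter.2 ⟨hwR hi', lt_trans (hwlt i' hi' i hi) hlt⟩
        · rw [mem_singleton.1 hi']
          exact mem_filter.2 ⟨huR hi, hlt⟩
      have h1 := card_le_card hsub
      rw [card_union_of_disjoint (by
          simp only [disjoint_singleton_right]
          exact fun h => (disjoint_left.1 hwu) h hi), hwcard, card_singleton] at h1
      omega
    · intro j hj i hi
      rw [hK4, mem_filter] at hj
      by_contra hcon
      have hlt : (R i).2 < (S j).2 :=
        lt_of_le_of_ne (not_lt.1 hcon) (hxr i j)
      have hsub : (SR \ (w ∪ u)) ∪ {i} ⊆ SR.filter fun i' => (R i').2 < (S j).2 := by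
        intro i' hi'
        rcases mem_union.1 hi' with hi' | hi'
        · rw [mem_sdiff, mem_union] at hi'
          push_neg at hi'
          have hll : (R i).1 < (R i').1 := hurest i hi i' hi'.1 hi'.2.1 hi'.2.2
          exact mem_filter.2 ⟨hi'.1, lt_trans (hRnest _ _ hll) hlt⟩
        · rw [mem_singleton.1 hi']
          exact mem_filter.2 ⟨huR hi, hlt⟩
      have h1 := card_le_card hsub
      have h3 : (SR \ (w ∪ u)).card = m - (t - 1) - t := by
        rw [card_sdiff_of_subset (union_subset hwR huR),
          card_union_of_disjoint hwu, hwcard, hucard]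
        omega
      rw [card_union_of_disjoint (by
          rw [disjoint_singleton_right, mem_sdiff]
          push_neg
          intro _
          exact mem_union_right _ hi),
        h3, card_singleton] at h1
      omega

/-- Master lemma, provider `R` and points `S` both crossing. -/
lemma master_crossing (t : ℕ) (ht : 0 < t)
    (R S : Fin n → L × L)
    (hRb : ∀ i j, (R i).1 < (R j).2) (hSb : ∀ i j, (S i).1 < (S j).2)
    (hRcross : ∀ i j, (R i).1 < (R j).1 → (R i).2 < (R j).2)
    (hScross : ∀ i j, (S i).1 < (S j).1 → (S i).2 < (S j).2)
    (hRlinj : Function.Injective fun i : Fin n => (R i).1)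
    (hSlinj : Function.Injective fun i : Fin n => (S i).1)
    (hxl : ∀ i j, (R i).1 ≠ (S j).1) (hxr : ∀ i j, (R i).2 ≠ (S j).2)
    (SR SS : Finset (Fin n))
    (hcross : ∀ i ∈ SR, ∀ j ∈ SS, (R i).1 < (S j).2 ∧ (S j).1 < (R i).2)
    (hmR : 3 * t - 2 ≤ SR.card) (hmS : 3 * t - 2 ≤ SS.card) :
    ∃ sS sR : Finset (Fin n), sS.card = t ∧ sR.card = t ∧ DisjHulls4 S sS R sR := by
  classical
  set m := SR.card with hm
  have htm : t ≤ m := by omega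
  have hpm : ∀ j, (SR.filter fun i => (R i).1 < (S j).1).card ≤ m :=
    fun j => card_le_card (filter_subset _ _)
  have hqm : ∀ j, (SR.filter fun i => (R i).2 < (S j).2).card ≤ m :=
    fun j => card_le_card (filter_subset _ _)
  set K1 : Finset (Fin n) := SS.filter (fun j =>
    (SR.filter fun i => (R i).1 < (S j).1).card ≤ m - t ∧
    (SR.filter fun i => (R i).2 < (S j).2).card ≤ m - t) with hK1
  set K2 : Finset (Fin n) := SS.filter (fun j =>
    t ≤ (SR.filter fun i => (R i).1 < (S j).1).card ∧
    t ≤ (SR.filter fun i => (R i).2 < (S j).2).card) with hK2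
  set K3 : Finset (Fin n) := SS.filter (fun j =>
    (SR.filter fun i => (R i).1 < (S j).1).card ≤ t - 1 ∧
    m - t + 1 ≤ (SR.filter fun i => (R i).2 < (S j).2).card) with hK3
  set K4 : Finset (Fin n) := SS.filter (fun j =>
    m - t + 1 ≤ (SR.filter fun i => (R i).1 < (S j).1).card ∧
    (SR.filter fun i => (R i).2 < (S j).2).card ≤ t - 1) with hK4
  have hcover : SS ⊆ K1 ∪ K2 ∪ K3 ∪ K4 := by
    intro j hj
    have h1 := hpm j; have h2 := hqm j
    simp only [hK1, hK2, hK3, hK4, mem_union, mem_filter]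
    have hor : ((SR.filter fun i => (R i).1 < (S j).1).card ≤ m - t ∧
          (SR.filter fun i => (R i).2 < (S j).2).card ≤ m - t) ∨
        (t ≤ (SR.filter fun i => (R i).1 < (S j).1).card ∧
          t ≤ (SR.filter fun i => (R i).2 < (S j).2).card) ∨
        ((SR.filter fun i => (R i).1 < (S j).1).card ≤ t - 1 ∧
          m - t + 1 ≤ (SR.filter fun i => (R i).2 < (S j).2).card) ∨
        (m - t + 1 ≤ (SR.filter fun i => (R i).1 < (S j).1).card ∧
          (SR.filter fun i => (R i).2 < (S j).2).card ≤ t - 1) := by omega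
    tauto
  have hbigclass : t ≤ K1.card ∨ t ≤ K2.card ∨ t ≤ K3.card ∨ t ≤ K4.card := by
    by_contra hcon
    push_neg at hcon
    obtain ⟨c1, c2, c3, c4⟩ := hcon
    have hsum : SS.card ≤ K1.card + K2.card + K3.card + K4.card := by
      calc SS.card ≤ (K1 ∪ K2 ∪ K3 ∪ K4).card := card_le_card hcover
        _ ≤ (K1 ∪ K2 ∪ K3).card + K4.card := card_union_le _ _
        _ ≤ (K1 ∪ K2).card + K3.card + K4.card := by
              have := card_union_le (K1 ∪ K2) K3; omega
        _ ≤ K1.card + K2.card + K3.card + K4.card := by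
              have := card_union_le K1 K2; omega
    have hexcl : K3 = ∅ ∨ K4 = ∅ := by
      by_contra hcon2
      push_neg at hcon2
      obtain ⟨j, hj⟩ := hcon2.1
      obtain ⟨j', hj'⟩ := hcon2.2
      rw [hK3, mem_filter] at hj
      rw [hK4, mem_filter] at hj'
      have hll : (S j).1 < (S j').1 := by
        rcases lt_trichotomy ((S j).1) ((S j').1) with h | h | h
        · exact h
        · exact absurd (hSlinj h) (by rintro rfl; omega)
        · have hmono : (SR.filter fun i => (R i).1 < (S j').1).card ≤
              (SR.filter fun i => (R i).1 < (S j).1).card := by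
            apply card_le_card
            intro i hi
            rw [mem_filter] at hi ⊢
            exact ⟨hi.1, lt_trans hi.2 h⟩
          omega
      have hrr : (S j).2 < (S j').2 := hScross _ _ hll
      have hmono : (SR.filter fun i => (R i).2 < (S j).2).card ≤
          (SR.filter fun i => (R i).2 < (S j').2).card := by
        apply card_le_card
        intro i hi
        rw [mem_filter] at hi ⊢
        exact ⟨hi.1, lt_trans hi.2 hrr⟩
      omega
    rcases hexcl with he | he <;> rw [he] at hsum <;> simp at hsum <;> omega
  have hbuild : ∀ (K u : Finset (Fin n)), K ⊆ SS → u ⊆ SR → t ≤ K.card → u.card = t →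
      ((∀ j ∈ K, ∀ i ∈ u, (S j).1 < (R i).1) ∨ (∀ j ∈ K, ∀ i ∈ u, (R i).1 < (S j).1)) →
      ((∀ j ∈ K, ∀ i ∈ u, (S j).2 < (R i).2) ∨ (∀ j ∈ K, ∀ i ∈ u, (R i).2 < (S j).2)) →
      ∃ sS sR : Finset (Fin n), sS.card = t ∧ sR.card = t ∧ DisjHulls4 S sS R sR := by
    intro K u hKS huR hK hu hdir1 hdir2
    obtain ⟨sS, hsSK, hsScard⟩ := Finset.exists_subset_card_eq (s := K) (n := t) hK
    refine ⟨sS, u, hsScard, hu, ?_⟩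
    have hLL : Disjoint (hull (endsL S sS)) (hull (endsL R u)) := by
      rcases hdir1 with h | h
      · exact sep_LL (fun j hj i hi => h j (hsSK hj) i hi)
      · exact sep_LL' (fun j hj i hi => h j (hsSK hj) i hi)
    have hRR : Disjoint (hull (endsR S sS)) (hull (endsR R u)) := by
      rcases hdir2 with h | h
      · exact sep_RR (fun j hj i hi => h j (hsSK hj) i hi)
      · exact sep_RR' (fun j hj i hi => h j (hsSK hj) i hi)
    refine build4 hSb hRb hLL ?_ ?_ hRR
    · exact sep_LR (fun j hj i hi => (hcross i (huR hi) j (hKS (hsSK hj))).2)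
    · exact sep_RL' (fun j hj i hi => (hcross i (huR hi) j (hKS (hsSK hj))).1)
  rcases hbigclass with hK | hK | hK | hK
  · -- K1 : p ≤ m-t, q ≤ m-t ; top-t window
    obtain ⟨u, huR, hucard, hut⟩ :=
      exists_top (fun i => (R i).1) hRlinj SR t htm
    refine hbuild K1 u (filter_subset _ _) huR hK hucard (Or.inl ?_) (Or.inl ?_)
    · intro j hj i hi
      rw [hK1, mem_filter] at hj
      by_contra hcon
      have hlt : (R i).1 < (S j).1 :=
        lt_of_le_of_ne (not_lt.1 hcon) (hxl i j)
      have hsub : (SR \ u) ∪ {i} ⊆ SR.filter fun i' => (R i').1 < (S j).1 := by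
        intro i' hi'
        rcases mem_union.1 hi' with hi' | hi'
        · rw [mem_sdiff] at hi'
          exact mem_filter.2 ⟨hi'.1, lt_trans (hut i hi i' hi'.1 hi'.2) hlt⟩
        · rw [mem_singleton.1 hi']
          exact mem_filter.2 ⟨huR hi, hlt⟩
      have h1 := card_le_card hsub
      rw [card_union_of_disjoint (by
          simp only [disjoint_singleton_right, mem_sdiff, not_and, not_not]
          exact fun _ => hi),
        card_sdiff_of_subset huR, card_singleton, hucard] at h1
      omega
    · intro j hj i hi
      rw [hK1, mem_filter] at hj
      by_contra hcon
      have hlt : (R i).2 < (S j).2 :=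
        lt_of_le_of_ne (not_lt.1 hcon) (hxr i j)
      have hsub : (SR \ u) ∪ {i} ⊆ SR.filter fun i' => (R i').2 < (S j).2 := by
        intro i' hi'
        rcases mem_union.1 hi' with hi' | hi'
        · rw [mem_sdiff] at hi'
          exact mem_filter.2 ⟨hi'.1,
            lt_trans (hRcross i' i (hut i hi i' hi'.1 hi'.2)) hlt⟩
        · rw [mem_singleton.1 hi']
          exact mem_filter.2 ⟨huR hi, hlt⟩
      have h1 := card_le_card hsub
      rw [card_union_of_disjoint (by
          simp only [disjoint_singleton_right, mem_sdiff, not_and, not_not]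
          exact fun _ => hi),
        card_sdiff_of_subset huR, card_singleton, hucard] at h1
      omega
  · -- K2 : p ≥ t, q ≥ t ; bottom-t window
    obtain ⟨u, huR, hucard, hut⟩ :=
      exists_bottom (fun i => (R i).1) hRlinj SR t htm
    refine hbuild K2 u (filter_subset _ _) huR hK hucard (Or.inr ?_) (Or.inr ?_)
    · intro j hj i hi
      rw [hK2, mem_filter] at hj
      by_contra hcon
      have hlt : (S j).1 < (R i).1 :=
        lt_of_le_of_ne (not_lt.1 hcon) (fun h => hxl i j h.symm)
      have hsub : (SR.filter fun i' => (R i').1 < (S j).1) ⊆ u.erase i := by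
        intro i'' hi''
        rw [mem_filter] at hi''
        have h2 : (R i'').1 < (R i).1 := lt_trans hi''.2 hlt
        have hiu : i'' ∈ u := by
          by_contra hne
          exact absurd h2 (not_lt.2 (hut i hi i'' hi''.1 hne).le)
        exact mem_erase.2 ⟨fun h => (by rw [h] at h2; exact lt_irrefl _ h2), hiu⟩
      have h1 := card_le_card hsub
      rw [card_erase_of_mem hi, hucard] at h1
      omega
    · intro j hj i hi
      rw [hK2, mem_filter] at hj
      by_contra hcon
      have hlt : (S j).2 < (R i).2 :=
        lt_of_le_of_ne (not_lt.1 hcon) (fun h => hxr i j h.symm)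
      have hsub : (SR.filter fun i' => (R i').2 < (S j).2) ⊆ u.erase i := by
        intro i'' hi''
        rw [mem_filter] at hi''
        have h2 : (R i'').2 < (R i).2 := lt_trans hi''.2 hlt
        have hll : (R i'').1 < (R i).1 := by
          rcases lt_trichotomy ((R i'').1) ((R i).1) with h | h | h
          · exact h
          · rw [hRlinj h] at h2; exact absurd h2 (lt_irrefl _)
          · exact absurd h2 (not_lt.2 (hRcross _ _ h).le)
        have hiu : i'' ∈ u := by
          by_contra hne
          exact absurd hll (not_lt.2 (hut i hi i'' hi''.1 hne).le)
        exact mem_erase.2 ⟨fun h => (by rw [h] at h2; exact lt_irrefl _ h2), hiu⟩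
      have h1 := card_le_card hsub
      rw [card_erase_of_mem hi, hucard] at h1
      omega
  · -- K3 : p ≤ t-1, q ≥ m-t+1 ; window at offset t-1
    obtain ⟨w, u, hwR, huR, hwu, hwcard, hucard, hwlt, hurest, hwrest⟩ :=
      exists_window (fun i => (R i).1) hRlinj SR (t - 1) t (by omega)
    refine hbuild K3 u (filter_subset _ _) huR hK hucard (Or.inl ?_) (Or.inr ?_)
    · intro j hj i hi
      rw [hK3, mem_filter] at hj
      by_contra hcon
      have hlt : (R i).1 < (S j).1 :=
        lt_of_le_of_ne (not_lt.1 hcon) (hxl i j)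
      have hsub : w ∪ {i} ⊆ SR.filter fun i' => (R i').1 < (S j).1 := by
        intro i' hi'
        rcases mem_union.1 hi' with hi' | hi'
        · exact mem_filter.2 ⟨hwR hi', lt_trans (hwlt i' hi' i hi) hlt⟩
        · rw [mem_singleton.1 hi']
          exact mem_filter.2 ⟨huR hi, hlt⟩
      have h1 := card_le_card hsub
      rw [card_union_of_disjoint (by
          simp only [disjoint_singleton_right]
          exact fun h => (disjoint_left.1 hwu) h hi), hwcard, card_singleton] at h1
      omega
    · intro j hj i hi
      rw [hK3, mem_filter] at hj
      by_contra hcon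
      have hlt : (S j).2 < (R i).2 :=
        lt_of_le_of_ne (not_lt.1 hcon) (fun h => hxr i j h.symm)
      have hsub : (SR.filter fun i' => (R i').2 < (S j).2) ⊆ w ∪ u.erase i := by
        intro i'' hi''
        rw [mem_filter] at hi''
        have h2 : (R i'').2 < (R i).2 := lt_trans hi''.2 hlt
        have hll : (R i'').1 < (R i).1 := by
          rcases lt_trichotomy ((R i'').1) ((R i).1) with h | h | h
          · exact h
          · rw [hRlinj h] at h2; exact absurd h2 (lt_irrefl _)
          · exact absurd h2 (not_lt.2 (hRcross _ _ h).le)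
        by_cases hw : i'' ∈ w
        · exact mem_union_left _ hw
        · have hiu : i'' ∈ u := by
            by_contra hne
            exact absurd hll (not_lt.2 (hurest i hi i'' hi''.1 hw hne).le)
          exact mem_union_right _
            (mem_erase.2 ⟨fun h => (by rw [h] at h2; exact lt_irrefl _ h2), hiu⟩)
      have h1 := card_le_card hsub
      have h2 := card_union_le w (u.erase i)
      rw [card_erase_of_mem hi, hucard, hwcard] at h2
      omega
  · -- K4 : p ≥ m-t+1, q ≤ t-1 ; window at offset m-2t+1
    obtain ⟨w, u, hwR, huR, hwu, hwcard, hucard, hwlt, hurest, hwrest⟩ :=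
      exists_window (fun i => (R i).1) hRlinj SR (m - (2 * t - 1)) t (by omega)
    refine hbuild K4 u (filter_subset _ _) huR hK hucard (Or.inr ?_) (Or.inl ?_)
    · intro j hj i hi
      rw [hK4, mem_filter] at hj
      by_contra hcon
      have hlt : (S j).1 < (R i).1 :=
        lt_of_le_of_ne (not_lt.1 hcon) (fun h => hxl i j h.symm)
      have hsub : (SR.filter fun i' => (R i').1 < (S j).1) ⊆ w ∪ u.erase i := by
        intro i'' hi''
        rw [mem_filter] at hi''
        have h2 : (R i'').1 < (R i).1 := lt_trans hi''.2 hlt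
        by_cases hw : i'' ∈ w
        · exact mem_union_left _ hw
        · have hiu : i'' ∈ u := by
            by_contra hne
            exact absurd h2 (not_lt.2 (hurest i hi i'' hi''.1 hw hne).le)
          exact mem_union_right _
            (mem_erase.2 ⟨fun h => (by rw [h] at h2; exact lt_irrefl _ h2), hiu⟩)
      have h1 := card_le_card hsub
      have h2 := card_union_le w (u.erase i)
      rw [card_erase_of_mem hi, hucard, hwcard] at h2
      omega
    · intro j hj i hi
      rw [hK4, mem_filter] at hj
      by_contra hcon
      have hlt : (R i).2 < (S j).2 :=
        lt_of_le_of_ne (not_lt.1 hcon) (hxr i j)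
      have hsub : w ∪ {i} ⊆ SR.filter fun i' => (R i').2 < (S j).2 := by
        intro i' hi'
        rcases mem_union.1 hi' with hi' | hi'
        · exact mem_filter.2 ⟨hwR hi',
            lt_trans (hRcross i' i (hwlt i' hi' i hi)) hlt⟩
        · rw [mem_singleton.1 hi']
          exact mem_filter.2 ⟨huR hi, hlt⟩
      have h1 := card_le_card hsub
      rw [card_union_of_disjoint (by
          simp only [disjoint_singleton_right]
          exact fun h => (disjoint_left.1 hwu) h hi), hwcard, card_singleton] at h1
      omega

end Master


section Cases

variable {L : Type} [LinearOrder L]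

/-- Case: both families in series. -/
lemma caseSS (t : ℕ) (ht : 0 < t) (P Q : Fin (4 * t) → L × L)
    (hPlt : ∀ i, (P i).1 < (P i).2) (hQlt : ∀ i, (Q i).1 < (Q i).2)
    (hPs : SeriesFam P) (hQs : SeriesFam Q)
    (hQrinj : Function.Injective fun j : Fin (4 * t) => (Q j).2)
    (hx1 : ∀ i j, (P i).1 ≠ (Q j).2) (hx2 : ∀ i j, (P i).2 ≠ (Q j).2) :
    ∃ sP sQ : Finset (Fin (4 * t)), sP.card = t ∧ sQ.card = t ∧
      Disjoint (hull (endsFull P sP)) (hull (endsFull Q sQ)) := by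
  classical
  have hcardu : (univ : Finset (Fin (4 * t))).card = 4 * t := by simp
  obtain ⟨U, hUu, hUcard, hUbot⟩ :=
    exists_bottom (fun j => (Q j).2) hQrinj univ (2 * t) (by omega)
  have hUne : U.Nonempty := by
    rw [← card_pos, hUcard]; omega
  obtain ⟨j₀, hj₀U, hj₀max⟩ := Finset.exists_max_image U (fun j => (Q j).2) hUne
  set θ := (Q j₀).2 with hθ
  -- every pair outside U lies entirely above θ
  have hUabove : ∀ j, j ∉ U → θ < (Q j).1 := by
    intro j hj
    have hlt : θ < (Q j).2 := hUbot j₀ hj₀U j (mem_univ j) hj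
    have hser := hQs j₀ j (by rintro rfl; exact hj hj₀U)
    rcases hser with h | h
    · exact h
    · exact absurd (lt_trans (lt_trans h (hQlt j₀)) hlt) (lt_irrefl _)
  have hUbelow : ∀ j ∈ U, (Q j).2 ≤ θ := hj₀max
  -- P-pairs straddling θ : at most one
  set St := univ.filter (fun i => (P i).1 < θ ∧ θ < (P i).2) with hSt
  have hStcard : St.card ≤ 1 := by
    rw [card_le_one]
    intro a ha b hb
    rw [hSt, mem_filter] at ha hb
    by_contra hne
    rcases hPs a b hne with h | h
    · exact absurd (lt_trans (lt_trans ha.2.2 h) hb.2.1) (lt_irrefl _)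
    · exact absurd (lt_trans (lt_trans hb.2.2 h) ha.2.1) (lt_irrefl _)
  set LOW := univ.filter (fun i => (P i).2 < θ) with hLOW
  set HIGH := univ.filter (fun i => θ < (P i).1) with hHIGH
  have hcover : (univ : Finset (Fin (4 * t))) ⊆ LOW ∪ HIGH ∪ St := by
    intro i _
    simp only [hLOW, hHIGH, hSt, mem_union, mem_filter, mem_univ, true_and]
    rcases lt_trichotomy ((P i).2) θ with h | h | h
    · exact Or.inl (Or.inl h)
    · exact absurd h (hx2 i j₀)
    · rcases lt_trichotomy ((P i).1) θ with h' | h' | h'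
      · exact Or.inr ⟨h', h⟩
      · exact absurd h' (hx1 i j₀)
      · exact Or.inl (Or.inr h')
  have hsum : 4 * t ≤ LOW.card + HIGH.card + St.card := by
    calc 4 * t = (univ : Finset (Fin (4 * t))).card := hcardu.symm
      _ ≤ (LOW ∪ HIGH ∪ St).card := card_le_card hcover
      _ ≤ (LOW ∪ HIGH).card + St.card := card_union_le _ _
      _ ≤ LOW.card + HIGH.card + St.card := by
          have := card_union_le LOW HIGH; omega
  have hors : t ≤ LOW.card ∨ t ≤ HIGH.card := by omega
  rcases hors with hc | hc
  · obtain ⟨sP, hsPL, hsPcard⟩ := Finset.exists_subset_card_eq (s := LOW) (n := t) hc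
    have hVc : t ≤ (univ \ U).card := by
      rw [card_sdiff_of_subset hUu, hcardu, hUcard]; omega
    obtain ⟨sQ, hsQV, hsQcard⟩ := Finset.exists_subset_card_eq (s := (univ \ U)) (n := t) hVc
    refine ⟨sP, sQ, hsPcard, hsQcard, ?_⟩
    apply SepLt.disjoint_hull
    rintro x ⟨i, hi, rfl | rfl⟩ y ⟨j, hj, rfl | rfl⟩ <;>
    · have hiL := hsPL hi
      rw [hLOW, mem_filter] at hiL
      have hjV : j ∉ U := (mem_sdiff.1 (hsQV hj)).2
      have h1 : θ < (Q j).1 := hUabove j hjV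
      have h2 := hQlt j
      have h3 := hPlt i
      have := hiL.2
      first
        | exact lt_trans (lt_trans (lt_trans h3 this) h1) h2
        | exact lt_trans (lt_trans h3 this) h1
        | exact lt_trans (lt_trans this h1) h2
        | exact lt_trans this h1
  · obtain ⟨sP, hsPH, hsPcard⟩ := Finset.exists_subset_card_eq (s := HIGH) (n := t) hc
    obtain ⟨sQ, hsQU, hsQcard⟩ := Finset.exists_subset_card_eq (s := U) (n := t) (by omega)
    refine ⟨sP, sQ, hsPcard, hsQcard, ?_⟩
    apply sep_symm_disjoint
    rintro y ⟨j, hj, rfl | rfl⟩ x ⟨i, hi, rfl | rfl⟩ <;>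
    · have hiH := hsPH hi
      rw [hHIGH, mem_filter] at hiH
      have h1 : (Q j).2 ≤ θ := hUbelow j (hsQU hj)
      have h2 := hQlt j
      have h3 := hPlt i
      have := hiH.2
      first
        | exact lt_trans (lt_of_le_of_lt (le_trans h2.le h1) this) h3
        | exact lt_of_le_of_lt (le_trans h2.le h1) this
        | exact lt_trans (lt_of_le_of_lt h1 this) h3
        | exact lt_of_le_of_lt h1 this

/-- Case: `P` in series, `Q` not in series (so all its lefts are below all its rights). -/
lemma caseS1 (t : ℕ) (ht : 0 < t) (P Q : Fin (4 * t) → L × L)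
    (hPlt : ∀ i, (P i).1 < (P i).2)
    (hPs : SeriesFam P)
    (hQb : ∀ i j, (Q i).1 < (Q j).2)
    (hQlinj : Function.Injective fun j : Fin (4 * t) => (Q j).1)
    (hQrinj : Function.Injective fun j : Fin (4 * t) => (Q j).2)
    (hxll : ∀ i j, (P i).1 ≠ (Q j).1) (hxlr : ∀ i j, (P i).1 ≠ (Q j).2)
    (hxrl : ∀ i j, (P i).2 ≠ (Q j).1) (hxrr : ∀ i j, (P i).2 ≠ (Q j).2) :
    ∃ sP sQ : Finset (Fin (4 * t)), sP.card = t ∧ sQ.card = t ∧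
      Disjoint (hull (endsFull P sP)) (hull (endsL Q sQ) ∪ hull (endsR Q sQ)) := by
  classical
  have hcardu : (univ : Finset (Fin (4 * t))).card = 4 * t := by simp
  -- top-t by left, with bound z₁ below it
  obtain ⟨A1, hA1u, hA1card, hA1top⟩ :=
    exists_top (fun j => (Q j).1) hQlinj univ t (by omega)
  have hBne : (univ \ A1).Nonempty := by
    rw [← card_pos, card_sdiff_of_subset hA1u, hcardu, hA1card]; omega
  obtain ⟨b₀, hb₀, hb₀max⟩ := Finset.exists_max_image (univ \ A1) (fun j => (Q j).1) hBne
  set z₁ := (Q b₀).1 with hz₁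
  have hz₁A1 : ∀ j ∈ A1, z₁ < (Q j).1 := fun j hj =>
    hA1top j hj b₀ (mem_univ b₀) (mem_sdiff.1 hb₀).2
  -- global max of lefts z₂
  obtain ⟨jm, _, hjm⟩ := Finset.exists_max_image (univ : Finset (Fin (4 * t)))
    (fun j => (Q j).1) ⟨b₀, mem_univ _⟩
  set z₂ := (Q jm).1 with hz₂
  have hz₂all : ∀ j, (Q j).1 ≤ z₂ := fun j => hjm j (mem_univ j)
  -- top-t by right, with z₃ its min
  obtain ⟨A2, hA2u, hA2card, hA2top⟩ :=
    exists_top (fun j => (Q j).2) hQrinj univ t (by omega)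
  have hA2ne : A2.Nonempty := by rw [← card_pos, hA2card]; omega
  obtain ⟨c₀, hc₀, hc₀min⟩ := Finset.exists_min_image A2 (fun j => (Q j).2) hA2ne
  set z₃ := (Q c₀).2 with hz₃
  have hz₃A2 : ∀ j ∈ A2, z₃ ≤ (Q j).2 := hc₀min
  have hz₃out : ∀ j, j ∉ A2 → (Q j).2 < z₃ := fun j hj =>
    hA2top c₀ hc₀ j (mem_univ j) hj
  have hz₁₂ : z₁ < z₂ := by
    have hjmA1 : jm ∈ A1 := by
      by_contra hjmA
      have hA1ne : A1.Nonempty := by rw [← card_pos, hA1card]; omega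
      obtain ⟨a, ha⟩ := hA1ne
      exact absurd (hz₂all a) (not_le.2 (hA1top a ha jm (mem_univ jm) hjmA))
    exact hz₁A1 jm hjmA1
  have hz₂₃ : z₂ < z₃ := hQb jm c₀
  -- bottom-t by left and by right
  obtain ⟨D1, hD1u, hD1card, hD1bot⟩ :=
    exists_bottom (fun j => (Q j).1) hQlinj univ t (by omega)
  obtain ⟨D2, hD2u, hD2card, hD2bot⟩ :=
    exists_bottom (fun j => (Q j).2) hQrinj univ t (by omega)
  have hD1le : ∀ j ∈ D1, (Q j).1 ≤ z₁ := by
    intro j hj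
    by_contra hcon
    push_neg at hcon
    have hsub : univ \ D1 ⊆ A1 := by
      intro j' hj'
      rw [mem_sdiff] at hj'
      by_contra hj'A
      have h1 : (Q j).1 < (Q j').1 := hD1bot j hj j' (mem_univ j') hj'.2
      have h2 : (Q j').1 ≤ z₁ := by
        rcases eq_or_ne j' b₀ with rfl | hne
        · exact le_refl _
        · exact le_of_lt (by
            have := hb₀max j' (mem_sdiff.2 ⟨mem_univ _, hj'A⟩)
            exact lt_of_le_of_ne this (fun h => hne (hQlinj h)))
      exact absurd (lt_of_le_of_lt h2 hcon) (not_lt.2 (le_of_lt h1))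
    have := card_le_card hsub
    rw [card_sdiff_of_subset hD1u, hcardu, hD1card, hA1card] at this
    omega
  have hD2le : ∀ j ∈ D2, (Q j).2 ≤ z₃ := by
    intro j hj
    by_contra hcon
    push_neg at hcon
    have hsub : univ \ D2 ⊆ A2 := by
      intro j' hj'
      rw [mem_sdiff] at hj'
      by_contra hj'A
      have h1 : (Q j).2 < (Q j').2 := hD2bot j hj j' (mem_univ j') hj'.2
      have h2 : (Q j').2 < z₃ := hz₃out j' hj'A
      exact absurd (lt_trans h1 h2) (not_lt.2 hcon.le)
    have := card_le_card hsub
    rw [card_sdiff_of_subset hD2u, hcardu, hD2card, hA2card] at this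
    omega
  -- P regions
  set R1 := univ.filter (fun i => (P i).2 < z₁) with hR1
  set R2 := univ.filter (fun i => z₁ < (P i).1 ∧ (P i).2 < z₂) with hR2
  set R3 := univ.filter (fun i => z₂ < (P i).1 ∧ (P i).2 < z₃) with hR3
  set R4 := univ.filter (fun i => z₃ < (P i).1) with hR4
  have hstrad : ∀ z : L, (∀ i, (P i).1 ≠ z) → (∀ i, (P i).2 ≠ z) →
      (univ.filter (fun i => (P i).1 < z ∧ z < (P i).2)).card ≤ 1 := by
    intro z h1 h2
    rw [card_le_one]
    intro a ha b hb
    rw [mem_filter] at ha hb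
    by_contra hne
    rcases hPs a b hne with h | h
    · exact absurd (lt_trans (lt_trans ha.2.2 h) hb.2.1) (lt_irrefl _)
    · exact absurd (lt_trans (lt_trans hb.2.2 h) ha.2.1) (lt_irrefl _)
  set St1 := univ.filter (fun i => (P i).1 < z₁ ∧ z₁ < (P i).2) with hSt1
  set St2 := univ.filter (fun i => (P i).1 < z₂ ∧ z₂ < (P i).2) with hSt2
  set St3 := univ.filter (fun i => (P i).1 < z₃ ∧ z₃ < (P i).2) with hSt3
  have hSt1card : St1.card ≤ 1 := hstrad z₁ (fun i => hxll i b₀) (fun i => hxrl i b₀)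
  have hSt2card : St2.card ≤ 1 := hstrad z₂ (fun i => hxll i jm) (fun i => hxrl i jm)
  have hSt3card : St3.card ≤ 1 := hstrad z₃ (fun i => hxlr i c₀) (fun i => hxrr i c₀)
  have hcover : (univ : Finset (Fin (4 * t))) ⊆ R1 ∪ R2 ∪ R3 ∪ R4 ∪ St1 ∪ St2 ∪ St3 := by
    intro i _
    simp only [hR1, hR2, hR3, hR4, hSt1, hSt2, hSt3, mem_union, mem_filter, mem_univ, true_and]
    have hne1l := hxll i b₀; have hne1r := hxrl i b₀
    have hne2l := hxll i jm; have hne2r := hxrl i jm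
    have hne3l := hxlr i c₀; have hne3r := hxrr i c₀
    have hilt := hPlt i
    rcases lt_trichotomy ((P i).2) z₁ with h | h | h
    · exact Or.inl (Or.inl (Or.inl (Or.inl (Or.inl (Or.inl h)))))
    · exact absurd h (by rw [hz₁]; exact hne1r)
    · rcases lt_trichotomy ((P i).1) z₁ with h' | h' | h'
      · exact Or.inl (Or.inl (Or.inr ⟨h', h⟩))
      · exact absurd h' (by rw [hz₁]; exact hne1l)
      · rcases lt_trichotomy ((P i).2) z₂ with g | g | g
        · exact Or.inl (Or.inl (Or.inl (Or.inl (Or.inl (Or.inr ⟨h', g⟩)))))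
        · exact absurd g (by rw [hz₂]; exact hne2r)
        · rcases lt_trichotomy ((P i).1) z₂ with g' | g' | g'
          · exact Or.inl (Or.inr ⟨g', g⟩)
          · exact absurd g' (by rw [hz₂]; exact hne2l)
          · rcases lt_trichotomy ((P i).2) z₃ with f | f | f
            · exact Or.inl (Or.inl (Or.inl (Or.inl (Or.inr ⟨g', f⟩))))
            · exact absurd f (by rw [hz₃]; exact hne3r)
            · rcases lt_trichotomy ((P i).1) z₃ with f' | f' | f'
              · exact Or.inr ⟨f', f⟩
              · exact absurd f' (by rw [hz₃]; exact hne3l)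
              · exact Or.inl (Or.inl (Or.inl (Or.inr f')))
  have hsum : 4 * t ≤ R1.card + R2.card + R3.card + R4.card + 3 := by
    have h0 : (univ : Finset (Fin (4 * t))).card ≤
        (R1 ∪ R2 ∪ R3 ∪ R4 ∪ St1 ∪ St2 ∪ St3).card := card_le_card hcover
    have h1 := card_union_le (R1 ∪ R2 ∪ R3 ∪ R4 ∪ St1 ∪ St2) St3
    have h2 := card_union_le (R1 ∪ R2 ∪ R3 ∪ R4 ∪ St1) St2
    have h3 := card_union_le (R1 ∪ R2 ∪ R3 ∪ R4) St1
    have h4 := card_union_le (R1 ∪ R2 ∪ R3) R4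
    have h5 := card_union_le (R1 ∪ R2) R3
    have h6 := card_union_le R1 R2
    rw [hcardu] at h0
    omega
  have hors : t ≤ R1.card ∨ t ≤ R2.card ∨ t ≤ R3.card ∨ t ≤ R4.card := by omega
  -- four mini separation builders
  have sepFL : ∀ (sP sQ : Finset (Fin (4 * t))), (∀ i ∈ sP, ∀ j ∈ sQ, (P i).2 < (Q j).1) →
      Disjoint (hull (endsFull P sP)) (hull (endsL Q sQ)) := by
    intro sP sQ h
    apply SepLt.disjoint_hull
    rintro x ⟨i, hi, rfl | rfl⟩ y ⟨j, hj, rfl⟩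
    · exact lt_trans (hPlt i) (h i hi j hj)
    · exact h i hi j hj
  have sepFR : ∀ (sP sQ : Finset (Fin (4 * t))), (∀ i ∈ sP, ∀ j ∈ sQ, (P i).2 < (Q j).2) →
      Disjoint (hull (endsFull P sP)) (hull (endsR Q sQ)) := by
    intro sP sQ h
    apply SepLt.disjoint_hull
    rintro x ⟨i, hi, rfl | rfl⟩ y ⟨j, hj, rfl⟩
    · exact lt_trans (hPlt i) (h i hi j hj)
    · exact h i hi j hj
  have sepLF : ∀ (sP sQ : Finset (Fin (4 * t))), (∀ i ∈ sP, ∀ j ∈ sQ, (Q j).1 < (P i).1) →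
      Disjoint (hull (endsFull P sP)) (hull (endsL Q sQ)) := by
    intro sP sQ h
    apply sep_symm_disjoint
    rintro y ⟨j, hj, rfl⟩ x ⟨i, hi, rfl | rfl⟩
    · exact h i hi j hj
    · exact lt_trans (h i hi j hj) (hPlt i)
  have sepRF : ∀ (sP sQ : Finset (Fin (4 * t))), (∀ i ∈ sP, ∀ j ∈ sQ, (Q j).2 < (P i).1) →
      Disjoint (hull (endsFull P sP)) (hull (endsR Q sQ)) := by
    intro sP sQ h
    apply sep_symm_disjoint
    rintro y ⟨j, hj, rfl⟩ x ⟨i, hi, rfl | rfl⟩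
    · exact h i hi j hj
    · exact lt_trans (h i hi j hj) (hPlt i)
  rcases hors with hc | hc | hc | hc
  · -- R1 : P below z₁ ; take the top-t lefts of Q
    obtain ⟨sP, hsPR, hsPcard⟩ := Finset.exists_subset_card_eq (s := R1) (n := t) hc
    refine ⟨sP, A1, hsPcard, hA1card, Set.disjoint_union_right.2 ⟨?_, ?_⟩⟩
    · refine sepFL sP A1 (fun i hi j hj => ?_)
      have hiR := hsPR hi; rw [hR1, mem_filter] at hiR
      exact lt_trans hiR.2 (hz₁A1 j hj)
    · refine sepFR sP A1 (fun i hi j hj => ?_)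
      have hiR := hsPR hi; rw [hR1, mem_filter] at hiR
      exact lt_trans (lt_trans hiR.2 (hz₁A1 j hj)) (hQb j j)
  · -- R2 : P inside (z₁, z₂) ; take the bottom-t lefts of Q
    obtain ⟨sP, hsPR, hsPcard⟩ := Finset.exists_subset_card_eq (s := R2) (n := t) hc
    refine ⟨sP, D1, hsPcard, hD1card, Set.disjoint_union_right.2 ⟨?_, ?_⟩⟩
    · refine sepLF sP D1 (fun i hi j hj => ?_)
      have hiR := hsPR hi; rw [hR2, mem_filter] at hiR
      exact lt_of_le_of_lt (hD1le j hj) hiR.2.1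
    · refine sepFR sP D1 (fun i hi j hj => ?_)
      have hiR := hsPR hi; rw [hR2, mem_filter] at hiR
      exact lt_trans hiR.2.2 (hQb jm j)
  · -- R3 : P inside (z₂, z₃) ; take the top-t rights of Q
    obtain ⟨sP, hsPR, hsPcard⟩ := Finset.exists_subset_card_eq (s := R3) (n := t) hc
    refine ⟨sP, A2, hsPcard, hA2card, Set.disjoint_union_right.2 ⟨?_, ?_⟩⟩
    · refine sepLF sP A2 (fun i hi j hj => ?_)
      have hiR := hsPR hi; rw [hR3, mem_filter] at hiR
      exact lt_of_le_of_lt (hz₂all j) hiR.2.1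
    · refine sepFR sP A2 (fun i hi j hj => ?_)
      have hiR := hsPR hi; rw [hR3, mem_filter] at hiR
      exact lt_of_lt_of_le hiR.2.2 (hz₃A2 j hj)
  · -- R4 : P above z₃ ; take the bottom-t rights of Q
    obtain ⟨sP, hsPR, hsPcard⟩ := Finset.exists_subset_card_eq (s := R4) (n := t) hc
    refine ⟨sP, D2, hsPcard, hD2card, Set.disjoint_union_right.2 ⟨?_, ?_⟩⟩
    · refine sepLF sP D2 (fun i hi j hj => ?_)
      have hiR := hsPR hi; rw [hR4, mem_filter] at hiR
      exact lt_trans (lt_of_lt_of_le (hQb j j) (hD2le j hj)) hiR.2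
    · refine sepRF sP D2 (fun i hi j hj => ?_)
      have hiR := hsPR hi; rw [hR4, mem_filter] at hiR
      exact lt_of_le_of_lt (hD2le j hj) hiR.2

end Cases


section Case4Same

variable {L : Type} [LinearOrder L]

/-- Case 4, same type, directed version: assumes `min Pr < min Qr`. -/
lemma case4_same_dir (t : ℕ) (ht : 0 < t) (P Q : Fin (4 * t) → L × L)
    (hPb : ∀ i j, (P i).1 < (P j).2) (hQb : ∀ i j, (Q i).1 < (Q j).2)
    (htypes : ((∀ i j, (P i).1 < (P j).1 → (P j).2 < (P i).2) ∧
        (∀ i j, (Q i).1 < (Q j).1 → (Q j).2 < (Q i).2)) ∨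
      ((∀ i j, (P i).1 < (P j).1 → (P i).2 < (P j).2) ∧
        (∀ i j, (Q i).1 < (Q j).1 → (Q i).2 < (Q j).2)))
    (hPlinj : Function.Injective fun i : Fin (4 * t) => (P i).1)
    (hPrinj : Function.Injective fun i : Fin (4 * t) => (P i).2)
    (hQlinj : Function.Injective fun j : Fin (4 * t) => (Q j).1)
    (hxll : ∀ i j, (P i).1 ≠ (Q j).1) (hxlr : ∀ i j, (P i).1 ≠ (Q j).2)
    (hxrl : ∀ i j, (P i).2 ≠ (Q j).1) (hxrr : ∀ i j, (P i).2 ≠ (Q j).2)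
    (i₀ j₀ : Fin (4 * t)) (hi₀ : ∀ i, (P i₀).2 ≤ (P i).2) (hj₀ : ∀ j, (Q j₀).2 ≤ (Q j).2)
    (hv : (P i₀).2 < (Q j₀).2) :
    ∃ sP sQ : Finset (Fin (4 * t)), sP.card = t ∧ sQ.card = t ∧ DisjHulls4 P sP Q sQ := by
  classical
  have hcardu : (univ : Finset (Fin (4 * t))).card = 4 * t := by simp
  set vP := (P i₀).2 with hvP
  set vQ := (Q j₀).2 with hvQ
  -- master application helper at a cut
  have hmaster : ∀ (SR SS : Finset (Fin (4 * t))), 3 * t - 2 ≤ SR.card → 3 * t - 2 ≤ SS.card →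
      (∀ j ∈ SR, ∀ i ∈ SS, (Q j).1 < (P i).2 ∧ (P i).1 < (Q j).2) →
      ∃ sP sQ : Finset (Fin (4 * t)), sP.card = t ∧ sQ.card = t ∧ DisjHulls4 P sP Q sQ := by
    intro SR SS h1 h2 hcr
    rcases htypes with ⟨hPn, hQn⟩ | ⟨hPc, hQc⟩
    · obtain ⟨sP, sQ, c1, c2, hd⟩ := master_nested t ht Q P hQb hPb hQn hQlinj hPlinj
        (fun i j => (hxll j i).symm) (fun i j => (hxrr j i).symm) SR SS hcr h1
        (Or.inr ⟨hPn, h2⟩)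
      exact ⟨sP, sQ, c1, c2, hd⟩
    · obtain ⟨sP, sQ, c1, c2, hd⟩ := master_crossing t ht Q P hQb hPb hQc hPc hQlinj hPlinj
        (fun i j => (hxll j i).symm) (fun i j => (hxrr j i).symm) SR SS hcr h1 h2
      exact ⟨sP, sQ, c1, c2, hd⟩
  have hmaster' : ∀ (SR SS : Finset (Fin (4 * t))), 3 * t - 2 ≤ SR.card → 3 * t - 2 ≤ SS.card →
      (∀ i ∈ SR, ∀ j ∈ SS, (P i).1 < (Q j).2 ∧ (Q j).1 < (P i).2) →
      ∃ sP sQ : Finset (Fin (4 * t)), sP.card = t ∧ sQ.card = t ∧ DisjHulls4 P sP Q sQ := by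
    intro SR SS h1 h2 hcr
    rcases htypes with ⟨hPn, hQn⟩ | ⟨hPc, hQc⟩
    · obtain ⟨sQ, sP, c1, c2, hd⟩ := master_nested t ht P Q hPb hQb hPn hPlinj hQlinj
        hxll hxrr SR SS hcr h1 (Or.inr ⟨hQn, h2⟩)
      exact ⟨sP, sQ, c2, c1, hd.symm⟩
    · obtain ⟨sQ, sP, c1, c2, hd⟩ := master_crossing t ht P Q hPb hQb hPc hQc hPlinj hQlinj
        hxll hxrr SR SS hcr h1 h2
      exact ⟨sP, sQ, c2, c1, hd.symm⟩
  -- step 1 : cut at vP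
  set SQ1 := univ.filter (fun j => (Q j).1 < vP) with hSQ1
  by_cases hc1 : 3 * t - 2 ≤ SQ1.card
  · refine hmaster SQ1 univ hc1 (by rw [hcardu]; omega) ?_
    intro j hj i _
    rw [hSQ1, mem_filter] at hj
    exact ⟨lt_of_lt_of_le hj.2 (hi₀ i), lt_of_lt_of_le (lt_of_lt_of_le (hPb i i₀) hv.le) (hj₀ j)⟩
  · push_neg at hc1
    have hE1 : t + 3 ≤ (univ.filter (fun j => vP < (Q j).1)).card := by
      have hcov : (univ : Finset (Fin (4 * t))) ⊆
          SQ1 ∪ univ.filter (fun j => vP < (Q j).1) := by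
        intro j _
        rw [mem_union, hSQ1, mem_filter, mem_filter]
        rcases lt_trichotomy ((Q j).1) vP with h | h | h
        · exact Or.inl ⟨mem_univ _, h⟩
        · exact absurd h.symm (hxrl i₀ j)
        · exact Or.inr ⟨mem_univ _, h⟩
      have := card_le_card hcov
      have h2 := card_union_le SQ1 (univ.filter (fun j => vP < (Q j).1))
      rw [hcardu] at this
      omega
    -- step 2 : cut at vQ
    set SP2 := univ.filter (fun i => vQ < (P i).2) with hSP2
    by_cases hc2 : 3 * t - 2 ≤ SP2.card
    · refine hmaster' SP2 univ hc2 (by rw [hcardu]; omega) ?_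
      intro i hi j _
      rw [hSP2, mem_filter] at hi
      exact ⟨lt_of_lt_of_le (lt_trans (hPb i i₀) hv) (hj₀ j), lt_trans (hQb j j₀) hi.2⟩
    · push_neg at hc2
      have hW : t + 3 ≤ (univ.filter (fun i => (P i).2 < vQ)).card := by
        have hcov : (univ : Finset (Fin (4 * t))) ⊆
            SP2 ∪ univ.filter (fun i => (P i).2 < vQ) := by
          intro i _
          rw [mem_union, hSP2, mem_filter, mem_filter]
          rcases lt_trichotomy ((P i).2) vQ with h | h | h
          · exact Or.inr ⟨mem_univ _, h⟩
          · exact absurd h (hxrr i j₀)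
          · exact Or.inl ⟨mem_univ _, h⟩
        have := card_le_card hcov
        have h2 := card_union_le SP2 (univ.filter (fun i => (P i).2 < vQ))
        rw [hcardu] at this
        omega
      -- U1 : bottom t by right of P ; θ₂ its max right
      obtain ⟨U1, hU1u, hU1card, hU1bot⟩ :=
        exists_bottom (fun i => (P i).2) hPrinj univ t (by omega)
      have hU1ne : U1.Nonempty := by rw [← card_pos, hU1card]; omega
      obtain ⟨i₂, hi₂U, hi₂max⟩ := Finset.exists_max_image U1 (fun i => (P i).2) hU1ne
      set θ₂ := (P i₂).2 with hθ₂
      have hU1v : ∀ i ∈ U1, (P i).2 < vQ := by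
        intro i hi
        by_contra hcon
        push_neg at hcon
        have hsub : univ.filter (fun i' => (P i').2 < vQ) ⊆ U1.erase i := by
          intro w hw
          rw [mem_filter] at hw
          have hwi : (P w).2 < (P i).2 := lt_of_lt_of_le hw.2 hcon
          have hwU : w ∈ U1 := by
            by_contra hwU
            exact absurd hwi (not_lt.2 (hU1bot i hi w (mem_univ w) hwU).le)
          exact mem_erase.2 ⟨fun h => (by rw [h] at hwi; exact lt_irrefl _ hwi), hwU⟩
        have := card_le_card hsub
        rw [card_erase_of_mem hi, hU1card] at this
        omega
      have hθv : θ₂ < vQ := hU1v i₂ hi₂U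
      -- TS certificate?
      set C2 := univ.filter (fun j => θ₂ < (Q j).1) with hC2
      by_cases hc3 : t ≤ C2.card
      · obtain ⟨sQ, hsQC, hsQcard⟩ := Finset.exists_subset_card_eq (s := C2) (n := t) hc3
        refine ⟨U1, sQ, hU1card, hsQcard, ?_⟩
        have key : ∀ i ∈ U1, ∀ j ∈ sQ, (P i).2 < (Q j).1 := by
          intro i hi j hj
          have hjC := hsQC hj
          rw [hC2, mem_filter] at hjC
          exact lt_of_le_of_lt (hi₂max i hi) hjC.2
        refine build4 hPb hQb ?_ ?_ ?_ ?_
        · exact sep_LL (fun i hi j hj => lt_trans (hPb i i) (key i hi j hj))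
        · exact sep_LR (fun i hi j hj => lt_trans (lt_trans (hPb i i) (key i hi j hj)) (hQb j j))
        · exact sep_RL (fun i hi j hj => key i hi j hj)
        · exact sep_RR (fun i hi j hj => lt_trans (key i hi j hj) (hQb j j))
      · push_neg at hc3
        have hSS3 : 3 * t - 2 ≤ (univ.filter (fun j => (Q j).1 < θ₂)).card := by
          have hcov : (univ : Finset (Fin (4 * t))) ⊆
              C2 ∪ univ.filter (fun j => (Q j).1 < θ₂) := by
            intro j _
            rw [mem_union, hC2, mem_filter, mem_filter]
            rcases lt_trichotomy ((Q j).1) θ₂ with h | h | h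
            · exact Or.inr ⟨mem_univ _, h⟩
            · exact absurd h.symm (hxrl i₂ j)
            · exact Or.inl ⟨mem_univ _, h⟩
          have := card_le_card hcov
          have h2 := card_union_le C2 (univ.filter (fun j => (Q j).1 < θ₂))
          rw [hcardu] at this
          omega
        have hSR3 : 3 * t - 2 ≤ (univ.filter (fun i => θ₂ < (P i).2)).card := by
          have hsub : univ.filter (fun i => ¬ θ₂ < (P i).2) ⊆ U1 := by
            intro i hi
            rw [mem_filter] at hi
            by_contra hiU
            exact hi.2 (lt_of_le_of_lt (hi₂max i₂ hi₂U) (hU1bot i₂ hi₂U i (mem_univ i) hiU))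
          have h1 := card_le_card hsub
          have h2 := card_filter_add_card_filter_not
            (s := (univ : Finset (Fin (4 * t)))) (p := fun i => θ₂ < (P i).2)
          rw [hcardu] at h2
          rw [hU1card] at h1
          omega
        refine hmaster' (univ.filter (fun i => θ₂ < (P i).2))
          (univ.filter (fun j => (Q j).1 < θ₂)) hSR3 hSS3 ?_
        intro i hi j hj
        rw [mem_filter] at hi hj
        constructor
        · exact lt_of_lt_of_le (lt_trans (hPb i i₀) hv) (hj₀ j)
        · exact lt_trans hj.2 hi.2

end Case4Same


section Case4Mixed

variable {L : Type} [LinearOrder L]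

/-- Case 4, mixed types: `P` crossing, `Q` nested. -/
lemma case4_mixed (t : ℕ) (ht : 0 < t) (P Q : Fin (4 * t) → L × L)
    (hPb : ∀ i j, (P i).1 < (P j).2) (hQb : ∀ i j, (Q i).1 < (Q j).2)
    (hQn : ∀ i j, (Q i).1 < (Q j).1 → (Q j).2 < (Q i).2)
    (hPlinj : Function.Injective fun i : Fin (4 * t) => (P i).1)
    (hPrinj : Function.Injective fun i : Fin (4 * t) => (P i).2)
    (hQlinj : Function.Injective fun j : Fin (4 * t) => (Q j).1)
    (hQrinj : Function.Injective fun j : Fin (4 * t) => (Q j).2)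
    (hxll : ∀ i j, (P i).1 ≠ (Q j).1) (hxlr : ∀ i j, (P i).1 ≠ (Q j).2)
    (hxrl : ∀ i j, (P i).2 ≠ (Q j).1) (hxrr : ∀ i j, (P i).2 ≠ (Q j).2) :
    ∃ sP sQ : Finset (Fin (4 * t)), sP.card = t ∧ sQ.card = t ∧ DisjHulls4 P sP Q sQ := by
  classical
  have hcardu : (univ : Finset (Fin (4 * t))).card = 4 * t := by simp
  have hQn' : ∀ i j, (Q i).2 < (Q j).2 → (Q j).1 < (Q i).1 := by
    intro i j h
    rcases lt_trichotomy ((Q j).1) ((Q i).1) with h' | h' | h'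
    · exact h'
    · rw [hQlinj h'] at h; exact absurd h (lt_irrefl _)
    · exact absurd h (not_lt.2 (hQn i j h').le)
  obtain ⟨i₀, _, hi₀⟩ := Finset.exists_min_image (univ : Finset (Fin (4 * t)))
    (fun i => (P i).2) ⟨⟨0, by omega⟩, mem_univ _⟩
  set vP := (P i₀).2 with hvP
  have hi₀min : ∀ i, vP ≤ (P i).2 := fun i => hi₀ i (mem_univ i)
  have hPlv : ∀ i, (P i).1 < vP := fun i => hPb i i₀
  -- step 1 : straddlers of the cut vP in Q
  set SQ1 := univ.filter (fun j => (Q j).1 < vP ∧ vP < (Q j).2) with hSQ1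
  by_cases hc1 : 3 * t - 2 ≤ SQ1.card
  · have hcr : ∀ j ∈ SQ1, ∀ i ∈ (univ : Finset (Fin (4 * t))),
        (Q j).1 < (P i).2 ∧ (P i).1 < (Q j).2 := by
      intro j hj i _
      rw [hSQ1, mem_filter] at hj
      exact ⟨lt_of_lt_of_le hj.2.1 (hi₀min i), lt_trans (hPlv i) hj.2.2⟩
    obtain ⟨sP, sQ, c1, c2, hd⟩ := master_nested t ht Q P hQb hPb hQn hQlinj hPlinj
      (fun i j => (hxll j i).symm) (fun i j => (hxrr j i).symm) SQ1 univ hcr hc1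
      (Or.inl (by rw [hcardu]; omega))
    exact ⟨sP, sQ, c1, c2, hd⟩
  · push_neg at hc1
    set E1 := univ.filter (fun j => vP < (Q j).1) with hE1
    set E2 := univ.filter (fun j => (Q j).2 < vP) with hE2
    have hcovE : (univ : Finset (Fin (4 * t))) ⊆ SQ1 ∪ E1 ∪ E2 := by
      intro j _
      simp only [hSQ1, hE1, hE2, mem_union, mem_filter, mem_univ, true_and]
      rcases lt_trichotomy ((Q j).1) vP with h | h | h
      · rcases lt_trichotomy ((Q j).2) vP with g | g | g
        · exact Or.inr g
        · exact absurd g (fun g => hxrr i₀ j g.symm)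
        · exact Or.inl (Or.inl ⟨h, g⟩)
      · exact absurd h (fun h => hxrl i₀ j h.symm)
      · exact Or.inl (Or.inr h)
    have hE12 : t + 3 ≤ E1.card + E2.card := by
      have h0 := card_le_card hcovE
      have h1 := card_union_le (SQ1 ∪ E1) E2
      have h2 := card_union_le SQ1 E1
      rw [hcardu] at h0
      omega
    have hnotboth : E1 = ∅ ∨ E2 = ∅ := by
      by_contra hcon
      push_neg at hcon
      obtain ⟨j, hj⟩ := hcon.1
      obtain ⟨j', hj'⟩ := hcon.2
      rw [hE1, mem_filter] at hj
      rw [hE2, mem_filter] at hj'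
      have h1 : (Q j').1 < (Q j).1 := lt_trans (lt_trans (hQb j' j') hj'.2) hj.2
      have h2 := hQn j' j h1
      exact absurd (lt_trans (lt_trans hj.2 (hQb j j)) h2) (not_lt.2 hj'.2.le)
    -- in either branch we set up analogous selections
    rcases hnotboth with hE0 | hE0
    · -- E1 empty : E2 big , the "rings left of the cut" branch
      have hE2c : t + 3 ≤ E2.card := by rw [hE0] at hE12; simpa using hE12
      -- Z1 : bottom t by right
      obtain ⟨Z1, hZ1u, hZ1card, hZ1bot⟩ :=
        exists_bottom (fun j => (Q j).2) hQrinj univ t (by omega)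
      have hZ1ne : Z1.Nonempty := by rw [← card_pos, hZ1card]; omega
      have hZ1v : ∀ j ∈ Z1, (Q j).2 < vP := by
        intro j hj
        by_contra hcon
        push_neg at hcon
        have hsub : E2 ⊆ Z1.erase j := by
          intro w hw
          rw [hE2, mem_filter] at hw
          have hwj : (Q w).2 < (Q j).2 := lt_of_lt_of_le hw.2 hcon
          have hwZ : w ∈ Z1 := by
            by_contra hwZ
            exact absurd hwj (not_lt.2 (hZ1bot j hj w (mem_univ w) hwZ).le)
          exact mem_erase.2 ⟨fun h => (by rw [h] at hwj; exact lt_irrefl _ hwj), hwZ⟩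
        have := card_le_card hsub
        rw [card_erase_of_mem hj, hZ1card] at this
        omega
      obtain ⟨jh, hjhZ, hjhmax⟩ := Finset.exists_max_image Z1 (fun j => (Q j).2) hZ1ne
      set ρ := (Q jh).2 with hρ
      obtain ⟨j', hj'Z, hj'min⟩ := Finset.exists_min_image Z1 (fun j => (Q j).1) hZ1ne
      set lam := (Q j').1 with hlam
      have hout_r : ∀ j, j ∉ Z1 → ρ < (Q j).2 := fun j hj => hZ1bot jh hjhZ j (mem_univ j) hj
      have hout_l : ∀ j, j ∉ Z1 → (Q j).1 < lam := by
        intro j hj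
        exact hQn' j' j (hZ1bot j' hj'Z j (mem_univ j) hj)
      have hlamρ : lam < ρ := lt_of_lt_of_le (hQb j' j') (hjhmax j' hj'Z)
      have hρv : ρ < vP := hZ1v jh hjhZ
      -- E-certificate : t P-pairs entirely above Z1
      set CE := univ.filter (fun i => ρ < (P i).1) with hCE
      by_cases hcE : t ≤ CE.card
      · obtain ⟨sP, hsPC, hsPcard⟩ := Finset.exists_subset_card_eq (s := CE) (n := t) hcE
        refine ⟨sP, Z1, hsPcard, hZ1card, ?_⟩
        have key : ∀ i ∈ sP, ∀ j ∈ Z1, (Q j).2 < (P i).1 := by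
          intro i hi j hj
          have := (mem_filter.1 (hsPC hi)).2
          exact lt_of_le_of_lt (hjhmax j hj) this
        refine build4 hPb hQb ?_ ?_ ?_ ?_
        · exact sep_LL' (fun i hi j hj => lt_trans (hQb j j) (key i hi j hj))
        · exact sep_LR' (fun i hi j hj => key i hi j hj)
        · exact sep_RL' (fun i hi j hj => lt_trans (lt_trans (hQb j j) (key i hi j hj)) (hPb i i))
        · exact sep_RR' (fun i hi j hj => lt_trans (key i hi j hj) (hPb i i))
      · push_neg at hcE
        -- C-certificate : t P-pairs containing all of Z1
        set CC := univ.filter (fun i => (P i).1 < lam) with hCC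
        by_cases hcC : t ≤ CC.card
        · obtain ⟨sP, hsPC, hsPcard⟩ := Finset.exists_subset_card_eq (s := CC) (n := t) hcC
          refine ⟨sP, Z1, hsPcard, hZ1card, ?_⟩
          have keyl : ∀ i ∈ sP, ∀ j ∈ Z1, (P i).1 < (Q j).1 := by
            intro i hi j hj
            exact lt_of_lt_of_le (mem_filter.1 (hsPC hi)).2 (hj'min j hj)
          have keyr : ∀ i ∈ sP, ∀ j ∈ Z1, (Q j).2 < (P i).2 := by
            intro i hi j hj
            exact lt_of_le_of_lt (hjhmax j hj) (lt_of_lt_of_le hρv (hi₀min i))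
          refine build4 hPb hQb ?_ ?_ ?_ ?_
          · exact sep_LL (fun i hi j hj => keyl i hi j hj)
          · exact sep_LR (fun i hi j hj => lt_trans (keyl i hi j hj) (hQb j j))
          · exact sep_RL' (fun i hi j hj => lt_trans (hQb j j) (keyr i hi j hj))
          · exact sep_RR' (fun i hi j hj => keyr i hi j hj)
        · push_neg at hcC
          -- XR : lam < Pl < ρ
          set XR := univ.filter (fun i => lam < (P i).1 ∧ (P i).1 < ρ) with hXR
          have hXRcard : 2 * t + 2 ≤ XR.card := by
            have hcov : (univ : Finset (Fin (4 * t))) ⊆ CE ∪ CC ∪ XR := by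
              intro i _
              simp only [hCE, hCC, hXR, mem_union, mem_filter, mem_univ, true_and]
              rcases lt_trichotomy ((P i).1) lam with h | h | h
              · exact Or.inl (Or.inr h)
              · exact absurd h (hxll i j')
              · rcases lt_trichotomy ((P i).1) ρ with g | g | g
                · exact Or.inr ⟨h, g⟩
                · exact absurd g (hxlr i jh)
                · exact Or.inl (Or.inl g)
            have h0 := card_le_card hcov
            have h1 := card_union_le (CE ∪ CC) XR
            have h2 := card_union_le CE CC
            rw [hcardu] at h0
            omega
          -- Z3 : next t by right
          obtain ⟨Z3, hZ3sub, hZ3card, hZ3bot⟩ :=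
            exists_bottom (fun j => (Q j).2) hQrinj (univ \ Z1) t
              (by rw [card_sdiff_of_subset hZ1u, hcardu, hZ1card]; omega)
          have hZ3ne : Z3.Nonempty := by rw [← card_pos, hZ3card]; omega
          obtain ⟨j₃, hj₃Z, hj₃max⟩ := Finset.exists_max_image Z3 (fun j => (Q j).2) hZ3ne
          set ρ₃ := (Q j₃).2 with hρ₃
          have hZ3r : ∀ j ∈ Z3, ρ < (Q j).2 := fun j hj =>
            hout_r j (mem_sdiff.1 (hZ3sub hj)).2
          have hZ3l : ∀ j ∈ Z3, (Q j).1 < lam := fun j hj =>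
            hout_l j (mem_sdiff.1 (hZ3sub hj)).2
          have hout3 : ∀ j, j ∉ Z1 → j ∉ Z3 → ρ₃ < (Q j).2 := by
            intro j hj1 hj3
            exact hZ3bot j₃ hj₃Z j (mem_sdiff.2 ⟨mem_univ _, hj1⟩) hj3
          -- YR certificate
          set YR := XR.filter (fun i => ρ₃ < (P i).2) with hYR
          by_cases hcY : t ≤ YR.card
          · obtain ⟨sP, hsPY, hsPcard⟩ := Finset.exists_subset_card_eq (s := YR) (n := t) hcY
            refine ⟨sP, Z3, hsPcard, hZ3card, ?_⟩
            have hmem : ∀ i ∈ sP, lam < (P i).1 ∧ (P i).1 < ρ ∧ ρ₃ < (P i).2 := by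
              intro i hi
              have h1 := hsPY hi
              rw [hYR, mem_filter, hXR, mem_filter] at h1
              exact ⟨h1.1.2.1, h1.1.2.2, h1.2⟩
            refine build4 hPb hQb ?_ ?_ ?_ ?_
            · exact sep_LL' (fun i hi j hj => lt_trans (hZ3l j hj) (hmem i hi).1)
            · exact sep_LR (fun i hi j hj => lt_trans (hmem i hi).2.1 (hZ3r j hj))
            · exact sep_RL' (fun i hi j hj =>
                lt_trans (lt_trans (hZ3l j hj) (hmem i hi).1) (hPb i i))
            · exact sep_RR' (fun i hi j hj => lt_of_le_of_lt (hj₃max j hj) (hmem i hi).2.2)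
          · push_neg at hcY
            set FF := XR.filter (fun i => (P i).2 < ρ₃) with hFF
            have hFFcard : t ≤ FF.card := by
              have hcov : XR ⊆ YR ∪ FF := by
                intro i hi
                simp only [hYR, hFF, mem_union, mem_filter]
                rcases lt_trichotomy ((P i).2) ρ₃ with h | h | h
                · exact Or.inr ⟨hi, h⟩
                · exact absurd h (hxrr i j₃)
                · exact Or.inl ⟨hi, h⟩
              have h0 := card_le_card hcov
              have h1 := card_union_le YR FF
              omega
            obtain ⟨Z4, hZ4sub, hZ4card, _⟩ :=
              exists_bottom (fun j => (Q j).2) hQrinj ((univ \ Z1) \ Z3) t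
                (by
                  rw [card_sdiff_of_subset hZ3sub, card_sdiff_of_subset hZ1u, hcardu, hZ1card, hZ3card]
                  omega)
            obtain ⟨sP, hsPF, hsPcard⟩ := Finset.exists_subset_card_eq (s := FF) (n := t) hFFcard
            refine ⟨sP, Z4, hsPcard, hZ4card, ?_⟩
            have hZ4r : ∀ j ∈ Z4, ρ₃ < (Q j).2 := by
              intro j hj
              have h1 := hZ4sub hj
              rw [mem_sdiff, mem_sdiff] at h1
              exact hout3 j h1.1.2 h1.2
            have hZ4l : ∀ j ∈ Z4, (Q j).1 < lam := by
              intro j hj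
              have h1 := hZ4sub hj
              rw [mem_sdiff, mem_sdiff] at h1
              exact hout_l j h1.1.2
            have hmem : ∀ i ∈ sP, lam < (P i).1 ∧ (P i).2 < ρ₃ := by
              intro i hi
              have h1 := hsPF hi
              rw [hFF, mem_filter, hXR, mem_filter] at h1
              exact ⟨h1.1.2.1, h1.2⟩
            refine build4 hPb hQb ?_ ?_ ?_ ?_
            · exact sep_LL' (fun i hi j hj => lt_trans (hZ4l j hj) (hmem i hi).1)
            · exact sep_LR (fun i hi j hj => lt_trans (lt_trans (hPb i i)
                (hmem i hi).2) (hZ4r j hj))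
            · exact sep_RL' (fun i hi j hj =>
                lt_trans (lt_trans (hZ4l j hj) (hmem i hi).1) (hPb i i))
            · exact sep_RR (fun i hi j hj => lt_trans (hmem i hi).2 (hZ4r j hj))
    · -- E2 empty : E1 big , the "rings right of the cut" branch
      have hE1c : t + 3 ≤ E1.card := by rw [hE0] at hE12; simpa using hE12
      -- W1 : top t by left
      obtain ⟨W1, hW1u, hW1card, hW1top⟩ :=
        exists_top (fun j => (Q j).1) hQlinj univ t (by omega)
      have hW1ne : W1.Nonempty := by rw [← card_pos, hW1card]; omega
      have hW1v : ∀ j ∈ W1, vP < (Q j).1 := by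
        intro j hj
        by_contra hcon
        push_neg at hcon
        have hsub : E1 ⊆ W1.erase j := by
          intro w hw
          rw [hE1, mem_filter] at hw
          have hwj : (Q j).1 < (Q w).1 := lt_of_le_of_lt hcon hw.2
          have hwW : w ∈ W1 := by
            by_contra hwW
            exact absurd hwj (not_lt.2 (hW1top j hj w (mem_univ w) hwW).le)
          exact mem_erase.2 ⟨fun h => (by rw [h] at hwj; exact lt_irrefl _ hwj), hwW⟩
        have := card_le_card hsub
        rw [card_erase_of_mem hj, hW1card] at this
        omega
      obtain ⟨j', hj'W, hj'min⟩ := Finset.exists_min_image W1 (fun j => (Q j).1) hW1ne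
      set lam := (Q j').1 with hlam
      obtain ⟨jh, hjhW, hjhmax⟩ := Finset.exists_max_image W1 (fun j => (Q j).2) hW1ne
      set ρ := (Q jh).2 with hρ
      have hout_l : ∀ j, j ∉ W1 → (Q j).1 < lam := fun j hj =>
        hW1top j' hj'W j (mem_univ j) hj
      have hout_r : ∀ j, j ∉ W1 → ρ < (Q j).2 := by
        intro j hj
        exact hQn j jh (hout_l j hj |>.trans_le (hj'min jh hjhW))
      have hvlam : vP < lam := hW1v j' hj'W
      have hlamρ : lam < ρ := lt_of_le_of_lt (hj'min jh hjhW) (hQb jh jh)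
      -- D-certificate : t P-pairs entirely below W1
      set CD := univ.filter (fun i => (P i).2 < lam) with hCD
      by_cases hcD : t ≤ CD.card
      · obtain ⟨sP, hsPC, hsPcard⟩ := Finset.exists_subset_card_eq (s := CD) (n := t) hcD
        refine ⟨sP, W1, hsPcard, hW1card, ?_⟩
        have key : ∀ i ∈ sP, ∀ j ∈ W1, (P i).2 < (Q j).1 := by
          intro i hi j hj
          exact lt_of_lt_of_le (mem_filter.1 (hsPC hi)).2 (hj'min j hj)
        refine build4 hPb hQb ?_ ?_ ?_ ?_
        · exact sep_LL (fun i hi j hj => lt_trans (hPb i i) (key i hi j hj))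
        · exact sep_LR (fun i hi j hj => lt_trans (lt_trans (hPb i i) (key i hi j hj)) (hQb j j))
        · exact sep_RL (fun i hi j hj => key i hi j hj)
        · exact sep_RR (fun i hi j hj => lt_trans (key i hi j hj) (hQb j j))
      · push_neg at hcD
        -- C-certificate : t P-pairs containing all of W1
        set CC := univ.filter (fun i => ρ < (P i).2) with hCC
        by_cases hcC : t ≤ CC.card
        · obtain ⟨sP, hsPC, hsPcard⟩ := Finset.exists_subset_card_eq (s := CC) (n := t) hcC
          refine ⟨sP, W1, hsPcard, hW1card, ?_⟩
          have keyl : ∀ i ∈ sP, ∀ j ∈ W1, (P i).1 < (Q j).1 := by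
            intro i hi j hj
            exact lt_of_lt_of_le (lt_of_lt_of_le (hPlv i) hvlam.le) (hj'min j hj)
          have keyr : ∀ i ∈ sP, ∀ j ∈ W1, (Q j).2 < (P i).2 := by
            intro i hi j hj
            exact lt_of_le_of_lt (hjhmax j hj) (mem_filter.1 (hsPC hi)).2
          refine build4 hPb hQb ?_ ?_ ?_ ?_
          · exact sep_LL (fun i hi j hj => keyl i hi j hj)
          · exact sep_LR (fun i hi j hj => lt_trans (keyl i hi j hj) (hQb j j))
          · exact sep_RL' (fun i hi j hj => lt_trans (hQb j j) (keyr i hi j hj))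
          · exact sep_RR' (fun i hi j hj => keyr i hi j hj)
        · push_neg at hcC
          set XL := univ.filter (fun i => lam < (P i).2 ∧ (P i).2 < ρ) with hXL
          have hXLcard : 2 * t + 2 ≤ XL.card := by
            have hcov : (univ : Finset (Fin (4 * t))) ⊆ CD ∪ CC ∪ XL := by
              intro i _
              simp only [hCD, hCC, hXL, mem_union, mem_filter, mem_univ, true_and]
              rcases lt_trichotomy ((P i).2) lam with h | h | h
              · exact Or.inl (Or.inl h)
              · exact absurd h (hxrl i j')
              · rcases lt_trichotomy ((P i).2) ρ with g | g | g
                · exact Or.inr ⟨h, g⟩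
                · exact absurd g (hxrr i jh)
                · exact Or.inl (Or.inr g)
            have h0 := card_le_card hcov
            have h1 := card_union_le (CD ∪ CC) XL
            have h2 := card_union_le CD CC
            rw [hcardu] at h0
            omega
          -- W3 : next t by left
          obtain ⟨W3, hW3sub, hW3card, hW3top⟩ :=
            exists_top (fun j => (Q j).1) hQlinj (univ \ W1) t
              (by rw [card_sdiff_of_subset hW1u, hcardu, hW1card]; omega)
          have hW3ne : W3.Nonempty := by rw [← card_pos, hW3card]; omega
          obtain ⟨j₃, hj₃W, hj₃min⟩ := Finset.exists_min_image W3 (fun j => (Q j).1) hW3ne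
          set μ := (Q j₃).1 with hμ
          have hW3l : ∀ j ∈ W3, (Q j).1 < lam := fun j hj =>
            hout_l j (mem_sdiff.1 (hW3sub hj)).2
          have hW3r : ∀ j ∈ W3, ρ < (Q j).2 := fun j hj =>
            hout_r j (mem_sdiff.1 (hW3sub hj)).2
          have hout3 : ∀ j, j ∉ W1 → j ∉ W3 → (Q j).1 < μ := by
            intro j hj1 hj3
            exact hW3top j₃ hj₃W j (mem_sdiff.2 ⟨mem_univ _, hj1⟩) hj3
          -- YL certificate
          set YL := XL.filter (fun i => (P i).1 < μ) with hYL
          by_cases hcY : t ≤ YL.card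
          · obtain ⟨sP, hsPY, hsPcard⟩ := Finset.exists_subset_card_eq (s := YL) (n := t) hcY
            refine ⟨sP, W3, hsPcard, hW3card, ?_⟩
            have hmem : ∀ i ∈ sP, lam < (P i).2 ∧ (P i).2 < ρ ∧ (P i).1 < μ := by
              intro i hi
              have h1 := hsPY hi
              rw [hYL, mem_filter, hXL, mem_filter] at h1
              exact ⟨h1.1.2.1, h1.1.2.2, h1.2⟩
            refine build4 hPb hQb ?_ ?_ ?_ ?_
            · exact sep_LL (fun i hi j hj =>
                lt_of_lt_of_le (hmem i hi).2.2 (hj₃min j hj))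
            · exact sep_LR (fun i hi j hj =>
                lt_trans (lt_of_lt_of_le (hmem i hi).2.2 (hj₃min j hj)) (hQb j j))
            · exact sep_RL' (fun i hi j hj => lt_trans (hW3l j hj) (hmem i hi).1)
            · exact sep_RR (fun i hi j hj => lt_trans (hmem i hi).2.1 (hW3r j hj))
          · push_neg at hcY
            set FF := XL.filter (fun i => μ < (P i).1) with hFF
            have hFFcard : t ≤ FF.card := by
              have hcov : XL ⊆ YL ∪ FF := by
                intro i hi
                simp only [hYL, hFF, mem_union, mem_filter]
                rcases lt_trichotomy ((P i).1) μ with h | h | h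
                · exact Or.inl ⟨hi, h⟩
                · exact absurd h (hxll i j₃)
                · exact Or.inr ⟨hi, h⟩
              have h0 := card_le_card hcov
              have h1 := card_union_le YL FF
              omega
            obtain ⟨W4, hW4sub, hW4card, _⟩ :=
              exists_top (fun j => (Q j).1) hQlinj ((univ \ W1) \ W3) t
                (by
                  rw [card_sdiff_of_subset hW3sub, card_sdiff_of_subset hW1u, hcardu, hW1card, hW3card]
                  omega)
            obtain ⟨sP, hsPF, hsPcard⟩ := Finset.exists_subset_card_eq (s := FF) (n := t) hFFcard
            refine ⟨sP, W4, hsPcard, hW4card, ?_⟩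
            have hW4l : ∀ j ∈ W4, (Q j).1 < μ := by
              intro j hj
              have h1 := hW4sub hj
              rw [mem_sdiff, mem_sdiff] at h1
              exact hout3 j h1.1.2 h1.2
            have hW4r : ∀ j ∈ W4, ρ < (Q j).2 := by
              intro j hj
              have h1 := hW4sub hj
              rw [mem_sdiff, mem_sdiff] at h1
              exact hout_r j h1.1.2
            have hmem : ∀ i ∈ sP, μ < (P i).1 ∧ (P i).2 < ρ := by
              intro i hi
              have h1 := hsPF hi
              rw [hFF, mem_filter, hXL, mem_filter] at h1
              exact ⟨h1.2, h1.1.2.2⟩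
            refine build4 hPb hQb ?_ ?_ ?_ ?_
            · exact sep_LL' (fun i hi j hj => lt_trans (hW4l j hj) (hmem i hi).1)
            · exact sep_LR (fun i hi j hj => lt_trans (lt_trans (hPb i i)
                (hmem i hi).2) (hW4r j hj))
            · exact sep_RL' (fun i hi j hj =>
                lt_trans (lt_trans (hW4l j hj) (hmem i hi).1) (hPb i i))
            · exact sep_RR (fun i hi j hj => lt_trans (hmem i hi).2 (hW4r j hj))

end Case4Mixed

/-- Lemma 16: two pure families `P`, `Q` of pairs, each of size `4t`, with all `16t`
coordinates pairwise distinct, contain subfamilies `P' ⊆ P`, `Q' ⊆ Q` of size `t` whose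
intervals are separated as stated, according to the types of `P` and `Q`. -/
theorem separating_subfamilies
    {L : Type} [LinearOrder L] (t : ℕ) (ht : 0 < t)
    (P Q : Fin (4 * t) → L × L)
    (hPlt : ∀ i, (P i).1 < (P i).2) (hQlt : ∀ i, (Q i).1 < (Q i).2)
    (hPpure : PureFam P) (hQpure : PureFam Q)
    (hinj : Function.Injective fun x : (Fin (4 * t) ⊕ Fin (4 * t)) × Bool =>
      if x.2 then (Sum.elim P Q x.1).2 else (Sum.elim P Q x.1).1) :
    ∃ sP sQ : Finset (Fin (4 * t)), sP.card = t ∧ sQ.card = t ∧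
      (SeriesFam P → SeriesFam Q →
        Disjoint (hull (endsFull P sP)) (hull (endsFull Q sQ))) ∧
      (SeriesFam P → ¬ SeriesFam Q →
        Disjoint (hull (endsFull P sP)) (hull (endsL Q sQ) ∪ hull (endsR Q sQ))) ∧
      (¬ SeriesFam P → SeriesFam Q →
        Disjoint (hull (endsFull Q sQ)) (hull (endsL P sP) ∪ hull (endsR P sP))) ∧
      (¬ SeriesFam P → ¬ SeriesFam Q →
        [hull (endsL P sP), hull (endsR P sP),
          hull (endsL Q sQ), hull (endsR Q sQ)].Pairwise Disjoint) := by
  classical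
  -- distinctness facts from injectivity
  have hval : ∀ x : (Fin (4 * t) ⊕ Fin (4 * t)) × Bool,
      (if x.2 then (Sum.elim P Q x.1).2 else (Sum.elim P Q x.1).1) =
      (if x.2 then (Sum.elim P Q x.1).2 else (Sum.elim P Q x.1).1) := fun _ => rfl
  have hPlinj : Function.Injective fun i : Fin (4 * t) => (P i).1 := by
    intro a b h
    have h2 := hinj (a₁ := (Sum.inl a, false)) (a₂ := (Sum.inl b, false)) (by simpa using h)
    simpa using h2
  have hPrinj : Function.Injective fun i : Fin (4 * t) => (P i).2 := by
    intro a b h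
    have h2 := hinj (a₁ := (Sum.inl a, true)) (a₂ := (Sum.inl b, true)) (by simpa using h)
    simpa using h2
  have hQlinj : Function.Injective fun j : Fin (4 * t) => (Q j).1 := by
    intro a b h
    have h2 := hinj (a₁ := (Sum.inr a, false)) (a₂ := (Sum.inr b, false)) (by simpa using h)
    simpa using h2
  have hQrinj : Function.Injective fun j : Fin (4 * t) => (Q j).2 := by
    intro a b h
    have h2 := hinj (a₁ := (Sum.inr a, true)) (a₂ := (Sum.inr b, true)) (by simpa using h)
    simpa using h2
  have hxll : ∀ i j, (P i).1 ≠ (Q j).1 := by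
    intro i j h
    have h2 := hinj (a₁ := (Sum.inl i, false)) (a₂ := (Sum.inr j, false)) (by simpa using h)
    simp at h2
  have hxlr : ∀ i j, (P i).1 ≠ (Q j).2 := by
    intro i j h
    have h2 := hinj (a₁ := (Sum.inl i, false)) (a₂ := (Sum.inr j, true)) (by simpa using h)
    simp at h2
  have hxrl : ∀ i j, (P i).2 ≠ (Q j).1 := by
    intro i j h
    have h2 := hinj (a₁ := (Sum.inl i, true)) (a₂ := (Sum.inr j, false)) (by simpa using h)
    simp at h2
  have hxrr : ∀ i j, (P i).2 ≠ (Q j).2 := by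
    intro i j h
    have h2 := hinj (a₁ := (Sum.inl i, true)) (a₂ := (Sum.inr j, true)) (by simpa using h)
    simp at h2
  -- block and type facts for non-series families
  have hblock : ∀ (F : Fin (4 * t) → L × L), (∀ i, (F i).1 < (F i).2) →
      ((∀ i j, i ≠ j → NestedP (F i) (F j)) ∨ (∀ i j, i ≠ j → CrossingP (F i) (F j))) →
      ∀ i j, (F i).1 < (F j).2 := by
    intro F hFlt hty i j
    by_cases hij : i = j
    · rw [hij]; exact hFlt j
    rcases hty with hN | hC
    · rcases hN i j hij with ⟨h1, h2⟩ | ⟨h1, h2⟩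
      · exact lt_trans h1 (hFlt j)
      · exact lt_trans (hFlt i) h2
    · rcases hC i j hij with ⟨h1, h2, h3⟩ | ⟨h1, h2, h3⟩
      · exact lt_trans (lt_trans h1 h2) h3
      · exact h2
  have hnestmono : ∀ (F : Fin (4 * t) → L × L), (∀ i j, i ≠ j → NestedP (F i) (F j)) →
      ∀ i j, (F i).1 < (F j).1 → (F j).2 < (F i).2 := by
    intro F hN i j h
    have hij : i ≠ j := by rintro rfl; exact absurd h (lt_irrefl _)
    rcases hN i j hij with ⟨h1, h2⟩ | ⟨h1, h2⟩
    · exact h2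
    · exact absurd h (not_lt.2 h1.le)
  have hcrossmono : ∀ (F : Fin (4 * t) → L × L), (∀ i j, i ≠ j → CrossingP (F i) (F j)) →
      ∀ i j, (F i).1 < (F j).1 → (F i).2 < (F j).2 := by
    intro F hC i j h
    have hij : i ≠ j := by rintro rfl; exact absurd h (lt_irrefl _)
    rcases hC i j hij with ⟨h1, h2, h3⟩ | ⟨h1, h2, h3⟩
    · exact h3
    · exact absurd h (not_lt.2 h1.le)
  by_cases hPs : SeriesFam P <;> by_cases hQs : SeriesFam Q
  · -- both series
    obtain ⟨sP, sQ, c1, c2, hd⟩ := caseSS t ht P Q hPlt hQlt hPs hQs hQrinj hxlr hxrr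
    exact ⟨sP, sQ, c1, c2, fun _ _ => hd, fun _ hq => absurd hQs hq,
      fun hp _ => absurd hPs hp, fun hp _ => absurd hPs hp⟩
  · -- P series, Q not
    have hQty : (∀ i j, i ≠ j → NestedP (Q i) (Q j)) ∨
        (∀ i j, i ≠ j → CrossingP (Q i) (Q j)) := by
      rcases hQpure with h | h | h
      · exact absurd h hQs
      · exact Or.inl h
      · exact Or.inr h
    have hQb : ∀ i j, (Q i).1 < (Q j).2 := hblock Q hQlt hQty
    obtain ⟨sP, sQ, c1, c2, hd⟩ := caseS1 t ht P Q hPlt hPs hQb hQlinj hQrinj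
      hxll hxlr hxrl hxrr
    exact ⟨sP, sQ, c1, c2, fun _ hq => absurd hq hQs, fun _ _ => hd,
      fun hp _ => absurd hPs hp, fun hp _ => absurd hPs hp⟩
  · -- Q series, P not
    have hPty : (∀ i j, i ≠ j → NestedP (P i) (P j)) ∨
        (∀ i j, i ≠ j → CrossingP (P i) (P j)) := by
      rcases hPpure with h | h | h
      · exact absurd h hPs
      · exact Or.inl h
      · exact Or.inr h
    have hPb : ∀ i j, (P i).1 < (P j).2 := hblock P hPlt hPty
    obtain ⟨sQ, sP, c1, c2, hd⟩ := caseS1 t ht Q P hQlt hQs hPb hPlinj hPrinj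
      (fun j i => (hxll i j).symm) (fun j i => (hxrl i j).symm)
      (fun j i => (hxlr i j).symm) (fun j i => (hxrr i j).symm)
    exact ⟨sP, sQ, c2, c1, fun hp _ => absurd hp hPs,
      fun hp _ => absurd hp hPs, fun _ _ => hd, fun _ hq => absurd hQs hq⟩
  · -- neither series
    have hPty : (∀ i j, i ≠ j → NestedP (P i) (P j)) ∨
        (∀ i j, i ≠ j → CrossingP (P i) (P j)) := by
      rcases hPpure with h | h | h
      · exact absurd h hPs
      · exact Or.inl h
      · exact Or.inr h
    have hQty : (∀ i j, i ≠ j → NestedP (Q i) (Q j)) ∨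
        (∀ i j, i ≠ j → CrossingP (Q i) (Q j)) := by
      rcases hQpure with h | h | h
      · exact absurd h hQs
      · exact Or.inl h
      · exact Or.inr h
    have hPb : ∀ i j, (P i).1 < (P j).2 := hblock P hPlt hPty
    have hQb : ∀ i j, (Q i).1 < (Q j).2 := hblock Q hQlt hQty
    have hmain : ∃ sP sQ : Finset (Fin (4 * t)), sP.card = t ∧ sQ.card = t ∧
        DisjHulls4 P sP Q sQ := by
      rcases hPty with hPN | hPC <;> rcases hQty with hQN | hQC
      · -- both nested : same-type with wlog on min right
        have hPn := hnestmono P hPN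
        have hQn := hnestmono Q hQN
        obtain ⟨i₀, _, hi₀⟩ := Finset.exists_min_image (univ : Finset (Fin (4 * t)))
          (fun i => (P i).2) ⟨⟨0, by omega⟩, mem_univ _⟩
        obtain ⟨j₀, _, hj₀⟩ := Finset.exists_min_image (univ : Finset (Fin (4 * t)))
          (fun j => (Q j).2) ⟨⟨0, by omega⟩, mem_univ _⟩
        rcases lt_trichotomy ((P i₀).2) ((Q j₀).2) with hv | hv | hv
        · exact case4_same_dir t ht P Q hPb hQb (Or.inl ⟨hPn, hQn⟩) hPlinj hPrinj hQlinj
            hxll hxlr hxrl hxrr i₀ j₀ (fun i => hi₀ i (mem_univ i))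
            (fun j => hj₀ j (mem_univ j)) hv
        · exact absurd hv (hxrr i₀ j₀)
        · obtain ⟨sQ, sP, c1, c2, hd⟩ := case4_same_dir t ht Q P hQb hPb
            (Or.inl ⟨hQn, hPn⟩) hQlinj hQrinj hPlinj
            (fun j i => (hxll i j).symm) (fun j i => (hxrl i j).symm)
            (fun j i => (hxlr i j).symm) (fun j i => (hxrr i j).symm) j₀ i₀
            (fun j => hj₀ j (mem_univ j)) (fun i => hi₀ i (mem_univ i)) hv
          exact ⟨sP, sQ, c2, c1, hd.symm⟩
      · -- P nested, Q crossing : mixed with roles swapped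
        have hPn := hnestmono P hPN
        obtain ⟨sQ, sP, c1, c2, hd⟩ := case4_mixed t ht Q P hQb hPb hPn hQlinj hQrinj
          hPlinj hPrinj
          (fun j i => (hxll i j).symm) (fun j i => (hxrl i j).symm)
          (fun j i => (hxlr i j).symm) (fun j i => (hxrr i j).symm)
        exact ⟨sP, sQ, c2, c1, hd.symm⟩
      · -- P crossing, Q nested : mixed
        have hQn := hnestmono Q hQN
        exact case4_mixed t ht P Q hPb hQb hQn hPlinj hPrinj hQlinj hQrinj
          hxll hxlr hxrl hxrr
      · -- both crossing
        have hPc := hcrossmono P hPC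
        have hQc := hcrossmono Q hQC
        obtain ⟨i₀, _, hi₀⟩ := Finset.exists_min_image (univ : Finset (Fin (4 * t)))
          (fun i => (P i).2) ⟨⟨0, by omega⟩, mem_univ _⟩
        obtain ⟨j₀, _, hj₀⟩ := Finset.exists_min_image (univ : Finset (Fin (4 * t)))
          (fun j => (Q j).2) ⟨⟨0, by omega⟩, mem_univ _⟩
        rcases lt_trichotomy ((P i₀).2) ((Q j₀).2) with hv | hv | hv
        · exact case4_same_dir t ht P Q hPb hQb (Or.inr ⟨hPc, hQc⟩) hPlinj hPrinj hQlinj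
            hxll hxlr hxrl hxrr i₀ j₀ (fun i => hi₀ i (mem_univ i))
            (fun j => hj₀ j (mem_univ j)) hv
        · exact absurd hv (hxrr i₀ j₀)
        · obtain ⟨sQ, sP, c1, c2, hd⟩ := case4_same_dir t ht Q P hQb hPb
            (Or.inr ⟨hQc, hPc⟩) hQlinj hQrinj hPlinj
            (fun j i => (hxll i j).symm) (fun j i => (hxrl i j).symm)
            (fun j i => (hxlr i j).symm) (fun j i => (hxrr i j).symm) j₀ i₀
            (fun j => hj₀ j (mem_univ j)) (fun i => hi₀ i (mem_univ i)) hv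
          exact ⟨sP, sQ, c2, c1, hd.symm⟩
    obtain ⟨sP, sQ, c1, c2, hd⟩ := hmain
    exact ⟨sP, sQ, c1, c2, fun hp _ => absurd hp hPs,
      fun hp _ => absurd hp hPs, fun _ hq => absurd hq hQs,
      fun _ _ => hd.pairwise⟩
end
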